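/- For all n ≥ 2, there is no 1-resilient lock-free strongly linearizable implementation of the Test-or-Set object in an asynchronous message-passing system of n processes. -/

import Mathlib

/-!
A model of asynchronous message-passing systems with `n` processes, following
Fischer–Lynch–Paterson: in a step `(p, m)` process `p` receives message `m`
(`none` if no message), changes its local state, and sends a finite set of messages.
Object implementations encode invocations and responses of operations as changes
of the state of the invoking process.
-/

namespace MP

/-- A step `(p, m)`: process `p` takes a step in which it attempts to receive a
message; it receives `m`, where `m = none` means it receives no message. -/
abbrev Step (n : ℕ) (Msg : Type) : Type := Fin n × Option Msg

/-- An operation event: the invocation of an operation `o`, or the response of `o`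
with return value `v`. -/
inductive Event (Op Val : Type) : Type
  | inv (o : Op)
  | res (o : Op) (v : Val)
deriving DecidableEq

/-- The operation an event belongs to. -/
def Event.opOf {Op Val : Type} : Event Op Val → Op
  | .inv o => o
  | .res o _ => o

/-- A (deterministic) message-passing implementation for `n` processes, of an object
with operations `Op` returning values in `Val`.  In each step a process receives at
most one message, changes its local state via `trans`, and sends a finite list of
messages; invocations and responses of operations are encoded (via `eventOf`) as
changes of the state of the invoking process.  `procOf o` is the process that may
invoke operation `o`. -/
structure Impl (n : ℕ) (Op Val : Type) : Type 1 where
  Msg : Type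
  PState : Type
  init : Fin n → PState
  trans : Fin n → PState → Option Msg → PState × List (Fin n × Msg)
  eventOf : Fin n → PState → PState → Option (Event Op Val)
  procOf : Op → Fin n

variable {n : ℕ} {Op Val : Type}

/-- A configuration: the local states of all processes together with the message
buffer (the multiset of all messages sent but not yet received, tagged with their
destination process). -/
structure Config (I : Impl n Op Val) : Type where
  states : Fin n → I.PState
  buffer : Multiset (Fin n × I.Msg)

/-- The initial configuration: all processes in their initial states, empty buffer. -/
def initConfig (I : Impl n Op Val) : Config I :=
  ⟨I.init, 0⟩

/-- A step `(p, some m)` is applicable to `C` iff `m` is in the buffer for `p`;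
a step `(p, none)` is always applicable. -/
def Applicable (I : Impl n Op Val) (C : Config I) (e : Step n I.Msg) : Prop :=
  match e.2 with
  | none => True
  | some m => (e.1, m) ∈ C.buffer

open scoped Classical in
/-- The configuration resulting from applying step `e` to configuration `C`:
the stepping process changes state, the received message (if any) is removed from
the buffer, and the sent messages are added to it. -/
noncomputable def applyStep (I : Impl n Op Val) (C : Config I) (e : Step n I.Msg) :
    Config I :=
  { states := Function.update C.states e.1 (I.trans e.1 (C.states e.1) e.2).1
    buffer :=
      (match e.2 with
        | none => C.buffer
        | some m => C.buffer.erase (e.1, m))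
      + ((I.trans e.1 (C.states e.1) e.2).2 : Multiset (Fin n × I.Msg)) }

/-- A finite history (sequence of steps) `H` is applicable to `C` if each of its
steps is applicable in turn. -/
def ApplicableHist (I : Impl n Op Val) : Config I → List (Step n I.Msg) → Prop
  | _, [] => True
  | C, e :: H => Applicable I C e ∧ ApplicableHist I (applyStep I C e) H

/-- `H(C)`: the configuration obtained by applying the finite history `H` to `C`. -/
noncomputable def applyHist (I : Impl n Op Val) : Config I → List (Step n I.Msg) → Config I
  | C, [] => C
  | C, e :: H => applyHist I (applyStep I C e) H

/-- The event (if any) encoded by the state change of the process taking step `e`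
from configuration `C`. -/
noncomputable def stepEvent (I : Impl n Op Val) (C : Config I) (e : Step n I.Msg) :
    Option (Event Op Val) :=
  I.eventOf e.1 (C.states e.1) ((applyStep I C e).states e.1)

/-- The operation-level history (sequence of invocation/response events) of the run
in which `H` is applied to `C`. -/
noncomputable def runEvents (I : Impl n Op Val) :
    Config I → List (Step n I.Msg) → List (Event Op Val)
  | _, [] => []
  | C, e :: H => (stepEvent I C e).toList ++ runEvents I (applyStep I C e) H

/-- The set of (finite) histories of implementation `I`: all finite histories
applicable to the initial configuration.  (This set is prefix-closed.) -/
def Histories (I : Impl n Op Val) : Set (List (Step n I.Msg)) :=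
  {H | ApplicableHist I (initConfig I) H}

/-- The operation-level events of a history `H` of `I`. -/
noncomputable def events (I : Impl n Op Val) (H : List (Step n I.Msg)) :
    List (Event Op Val) :=
  runEvents I (initConfig I) H

/-- Operation `o` has been invoked in the event history `L`. -/
def Invoked (o : Op) (L : List (Event Op Val)) : Prop := Event.inv o ∈ L

/-- Operation `o` is complete in the event history `L`: `L` contains both its
invocation and a response for it. -/
def Completed (o : Op) (L : List (Event Op Val)) : Prop :=
  Event.inv o ∈ L ∧ ∃ v, Event.res o v ∈ L

/-- Operation `o` is pending in `L`: invoked but with no response. -/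
def Pending (o : Op) (L : List (Event Op Val)) : Prop :=
  Event.inv o ∈ L ∧ ∀ v, Event.res o v ∉ L

/-- `o` precedes `o'` in `L`: a response of `o` occurs (strictly) before the
invocation of `o'`. -/
def Precedes (L : List (Event Op Val)) (o o' : Op) : Prop :=
  ∃ (i j : ℕ) (hi : i < L.length) (hj : j < L.length),
    i < j ∧ (∃ v, L.get ⟨i, hi⟩ = Event.res o v) ∧ L.get ⟨j, hj⟩ = Event.inv o'

/-- A sequential event history: invocations immediately followed by their matching
responses, possibly ending with a single pending invocation (no two operations are
concurrent). -/
def Sequential : List (Event Op Val) → Prop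
  | [] => True
  | [Event.inv _] => True
  | Event.inv o :: Event.res o' _ :: L => o = o' ∧ Sequential L
  | _ => False

/-- `x` occurs at most once in the list `L`. -/
def AtMostOnce {β : Type _} (x : β) (L : List β) : Prop :=
  ∀ (i j : ℕ) (hi : i < L.length) (hj : j < L.length),
    L.get ⟨i, hi⟩ = x → L.get ⟨j, hj⟩ = x → i = j

/-- Operation `o` has at most one response event in `L`. -/
def AtMostOneRes (o : Op) (L : List (Event Op Val)) : Prop :=
  ∀ (i j : ℕ) (hi : i < L.length) (hj : j < L.length) (v v' : Val),
    L.get ⟨i, hi⟩ = Event.res o v → L.get ⟨j, hj⟩ = Event.res o v' → i = j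

/-- Well-formedness of an implementation: in every history, each operation is
invoked at most once, responds at most once, and responses follow invocations. -/
def WellFormed (I : Impl n Op Val) : Prop :=
  ∀ H ∈ Histories I,
    (∀ o : Op, AtMostOnce (Event.inv o) (events I H)) ∧
    (∀ o : Op, AtMostOneRes o (events I H)) ∧
    (∀ (o : Op) (v : Val), Event.res o v ∈ events I H → Event.inv o ∈ events I H)

/-- `L'` is a completion of the event history `L`: the events of a subset (`removed`)
of the pending operations of `L` are removed, and the remaining pending operations
are completed by appending responses `R` for them. -/
def IsCompletion (L L' : List (Event Op Val)) : Prop :=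
  ∃ (removed : Op → Bool) (R : List (Event Op Val)),
    (∀ o, removed o = true → Pending o L) ∧
    (∀ ev ∈ R, ∃ (o : Op) (v : Val), ev = Event.res o v ∧ Pending o L ∧ removed o = false) ∧
    (∀ o : Op, Pending o L → removed o = false → ∃ v, Event.res o v ∈ R) ∧
    (R.map Event.opOf).Nodup ∧
    L' = L.filter (fun ev => !removed ev.opOf) ++ R

/-- `f` is a linearization function for (the set of histories of) `I` with respect to
the sequential specification `Spec`: it maps each history `H` of `I` to a sequential
history `f H` that (1) has exactly the same operations (with the same responses) as
some completion of the events of `H`, (2) respects precedence, and (3) conforms to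
`Spec`. -/
def IsLinearizationFn (I : Impl n Op Val) (Spec : List (Event Op Val) → Prop)
    (f : List (Step n I.Msg) → List (Event Op Val)) : Prop :=
  ∀ H ∈ Histories I,
    Sequential (f H) ∧
    (∃ L', IsCompletion (events I H) L' ∧
      (∀ ev : Event Op Val, ev ∈ f H ↔ ev ∈ L') ∧
      (∀ o o' : Op, Precedes L' o o' → Precedes (f H) o o')) ∧
    Spec (f H)

/-- `I` is linearizable with respect to the sequential specification `Spec`. -/
def Linearizable (I : Impl n Op Val) (Spec : List (Event Op Val) → Prop) : Prop :=
  ∃ f, IsLinearizationFn I Spec f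

/-- `I` is strongly linearizable: there is a linearization function mapping
prefixes of histories to prefixes of their linearizations. -/
def StronglyLinearizable (I : Impl n Op Val) (Spec : List (Event Op Val) → Prop) : Prop :=
  ∃ f, IsLinearizationFn I Spec f ∧
    ∀ G H, G ∈ Histories I → H ∈ Histories I → G <+: H → f G <+: f H

/-- The finite history consisting of the first `k` steps of an infinite history `S`. -/
def prefixSteps {β : Type _} (S : ℕ → β) (k : ℕ) : List β :=
  (List.range k).map S

/-- The infinite history `S` is applicable to `C`: every step is applicable to the
configuration reached by the preceding steps. -/
def InfApplicable (I : Impl n Op Val) (C : Config I) (S : ℕ → Step n I.Msg) : Prop :=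
  ∀ k, Applicable I (applyHist I C (prefixSteps S k)) (S k)

/-- Process `p` is correct in the infinite history `S`: it takes infinitely many steps. -/
def CorrectProc {Msg : Type} (p : Fin n) (S : ℕ → Step n Msg) : Prop :=
  ∀ k, ∃ k' ≥ k, (S k').1 = p

/-- At most one process crashes (i.e., takes only finitely many steps) in `S`. -/
def AtMostOneCrash {Msg : Type} (S : ℕ → Step n Msg) : Prop :=
  ∀ p q : Fin n, ¬ CorrectProc p S → ¬ CorrectProc q S → p = q

/-- Every message sent to a correct process is eventually received. -/
def FairDelivery (I : Impl n Op Val) (C : Config I) (S : ℕ → Step n I.Msg) : Prop :=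
  ∀ (k : ℕ) (p : Fin n) (m : I.Msg), CorrectProc p S →
    (p, m) ∈ (applyHist I C (prefixSteps S k)).buffer →
    ∃ k' ≥ k, S k' = (p, some m)

/-- `I` is 1-resilient lock-free: for every reachable configuration (reached by a
history `H₀`) with a pending operation by process `p`, and every infinite history
applicable to it in which at most one process crashes, `p` is correct, and every
message sent to a correct process is eventually received, some finite prefix
completes an operation not yet complete. -/
def OneResilientLockFree (I : Impl n Op Val) : Prop :=
  ∀ H₀ ∈ Histories I, ∀ (p : Fin n) (o : Op),
    I.procOf o = p → Pending o (events I H₀) →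
    ∀ S : ℕ → Step n I.Msg,
      InfApplicable I (applyHist I (initConfig I) H₀) S →
      AtMostOneCrash S → CorrectProc p S →
      FairDelivery I (applyHist I (initConfig I) H₀) S →
      ∃ (k : ℕ) (o' : Op),
        Completed o' (events I (H₀ ++ prefixSteps S k)) ∧ ¬ Completed o' (events I H₀)

end MP

namespace MP

/-- The operations of a Test-or-Set (ToS) object: a single TEST and a single SET. -/
inductive ToSOp : Type
  | test
  | set
deriving DecidableEq

/-- Sequential specification of Test-or-Set (`true` codes the bit 1, `false` codes 0):
a TEST returns 1 iff a SET occurs before it, and 0 otherwise. -/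
def ToSSpec (L : List (Event ToSOp Bool)) : Prop :=
  ∀ (i : ℕ) (hi : i < L.length) (v : Bool), L.get ⟨i, hi⟩ = Event.res ToSOp.test v →
    (v = true ↔ ∃ (j : ℕ) (hj : j < L.length), j < i ∧ L.get ⟨j, hj⟩ = Event.inv ToSOp.set)

variable {n : ℕ}

/-- The system obtained by running algorithm `A` on a ToS implementation `I`:
the distinguished process `p0` invokes TEST (as its first step), the distinguished
process `p1 ≠ p0` invokes SET (as its first step), each operation is invoked only
once, and the other processes only help. -/
structure ToSAlg (I : Impl n ToSOp Bool) (p0 p1 : Fin n) : Prop where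
  distinct : p0 ≠ p1
  proc_test : I.procOf ToSOp.test = p0
  proc_set : I.procOf ToSOp.set = p1
  events_own : ∀ (p : Fin n) (s s' : I.PState) (ev : Event ToSOp Bool),
    I.eventOf p s s' = some ev → I.procOf ev.opOf = p
  wellFormed : WellFormed I
  invokes_test : ∀ m : Option I.Msg,
    I.eventOf p0 (I.init p0) (I.trans p0 (I.init p0) m).1 = some (Event.inv ToSOp.test)
  invokes_set : ∀ m : Option I.Msg,
    I.eventOf p1 (I.init p1) (I.trans p1 (I.init p1) m).1 = some (Event.inv ToSOp.set)

/-- The TEST operation has returned the value `v` in the history `H` (applied to the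
initial configuration). -/
def TestReturned (I : Impl n ToSOp Bool) (H : List (Step n I.Msg)) (v : Bool) : Prop :=
  Event.res ToSOp.test v ∈ events I H

/-- The configuration reached by the history `H₀` is `v`-valent: there is no finite
history `H` applicable to it such that the TEST operation has returned `1 - v`. -/
def ToSValent (I : Impl n ToSOp Bool) (H₀ : List (Step n I.Msg)) (v : Bool) : Prop :=
  (H₀ ∈ Histories I) ∧
  ∀ H : List (Step n I.Msg), (H₀ ++ H) ∈ Histories I → ¬ TestReturned I (H₀ ++ H) (!v)

/-- The configuration reached by `H₀` is bivalent: neither 0-valent nor 1-valent. -/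
def ToSBivalent (I : Impl n ToSOp Bool) (H₀ : List (Step n I.Msg)) : Prop :=
  (H₀ ∈ Histories I) ∧ ¬ ToSValent I H₀ false ∧ ¬ ToSValent I H₀ true

end MP

namespace MP

open scoped Classical

section Plumbing

variable {n : ℕ} {Op Val : Type} (I : Impl n Op Val)

lemma Config.ext' {C D : Config I} (h1 : C.states = D.states) (h2 : C.buffer = D.buffer) :
    C = D := by cases C; cases D; simp_all

lemma applyHist_append (C : Config I) (A B : List (Step n I.Msg)) :
    applyHist I C (A ++ B) = applyHist I (applyHist I C A) B := by
  induction A generalizing C with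
  | nil => rfl
  | cons e A ih => simp [applyHist, ih]

lemma applicableHist_append (C : Config I) (A B : List (Step n I.Msg)) :
    ApplicableHist I C (A ++ B) ↔
      ApplicableHist I C A ∧ ApplicableHist I (applyHist I C A) B := by
  induction A generalizing C with
  | nil => simp [ApplicableHist, applyHist]
  | cons e A ih => simp [ApplicableHist, applyHist, ih, and_assoc]

lemma runEvents_append (C : Config I) (A B : List (Step n I.Msg)) :
    runEvents I C (A ++ B) = runEvents I C A ++ runEvents I (applyHist I C A) B := by
  induction A generalizing C with
  | nil => rfl
  | cons e A ih => simp [runEvents, applyHist, ih]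

lemma events_append (A B : List (Step n I.Msg)) :
    events I (A ++ B) = events I A ++ runEvents I (applyHist I (initConfig I) A) B :=
  runEvents_append I _ A B

lemma hist_append {A B : List (Step n I.Msg)} :
    (A ++ B) ∈ Histories I ↔
      A ∈ Histories I ∧ ApplicableHist I (applyHist I (initConfig I) A) B :=
  applicableHist_append I _ A B

lemma hist_prefix {A B : List (Step n I.Msg)} (h : A <+: B) (hB : B ∈ Histories I) :
    A ∈ Histories I := by
  obtain ⟨t, rfl⟩ := h
  exact ((hist_append I).1 hB).1

lemma applicable_at (C : Config I) (X : List (Step n I.Msg)) (h : ApplicableHist I C X)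
    (i : ℕ) (hi : i < X.length) :
    Applicable I (applyHist I C (X.take i)) (X.get ⟨i, hi⟩) := by
  induction X generalizing C i with
  | nil => simp at hi
  | cons e X ih =>
    cases i with
    | zero => exact h.1
    | succ i => exact ih (applyStep I C e) h.2 i (by simpa using hi)

lemma prefixSteps_zero {β : Type _} (S : ℕ → β) : prefixSteps S 0 = [] := rfl

lemma prefixSteps_succ {β : Type _} (S : ℕ → β) (k : ℕ) :
    prefixSteps S (k + 1) = prefixSteps S k ++ [S k] := by
  simp [prefixSteps, List.range_succ]

lemma prefixSteps_length {β : Type _} (S : ℕ → β) (k : ℕ) :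
    (prefixSteps S k).length = k := by simp [prefixSteps]

lemma prefixSteps_add {β : Type _} (S : ℕ → β) (a b : ℕ) :
    prefixSteps S (a + b) = prefixSteps S a ++ prefixSteps (fun i => S (a + i)) b := by
  induction b with
  | zero => simp [prefixSteps_zero]
  | succ b ih => rw [← Nat.add_assoc, prefixSteps_succ, ih, prefixSteps_succ]; simp

lemma applyStep_states_ne (C : Config I) (e : Step n I.Msg) {p : Fin n} (h : p ≠ e.1) :
    (applyStep I C e).states p = C.states p := by
  simp [applyStep, Function.update_of_ne h]

lemma applyStep_states_self (C : Config I) (e : Step n I.Msg) :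
    (applyStep I C e).states e.1 = (I.trans e.1 (C.states e.1) e.2).1 := by
  simp [applyStep]

lemma applyHist_states_ne (C : Config I) (H : List (Step n I.Msg)) {p : Fin n}
    (h : ∀ s ∈ H, s.1 ≠ p) : (applyHist I C H).states p = C.states p := by
  induction H generalizing C with
  | nil => rfl
  | cons e H ih =>
    rw [applyHist, ih _ fun s hs => h s (List.mem_cons_of_mem _ hs),
      applyStep_states_ne I C e (fun hp => h e (List.mem_cons_self) hp.symm)]

lemma stepEvent_eq (C : Config I) (e : Step n I.Msg) :
    stepEvent I C e = I.eventOf e.1 (C.states e.1) (I.trans e.1 (C.states e.1) e.2).1 := by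
  simp [stepEvent, applyStep_states_self]

lemma runEvents_mem (C : Config I) (H : List (Step n I.Msg)) (ev : Event Op Val)
    (h : ev ∈ runEvents I C H) :
    ∃ s ∈ H, ∃ st st', I.eventOf s.1 st st' = some ev := by
  induction H generalizing C with
  | nil => simp [runEvents] at h
  | cons e H ih =>
    rw [runEvents, List.mem_append] at h
    rcases h with h | h
    · rcases hse : stepEvent I C e with _ | ev'
      · simp [hse] at h
      · simp only [hse, Option.toList_some, List.mem_singleton] at h
        subst h
        exact ⟨e, List.mem_cons_self, _, _, hse⟩
    · obtain ⟨s, hs, hst⟩ := ih _ h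
      exact ⟨s, List.mem_cons_of_mem _ hs, hst⟩

/-- A message in the buffer stays there as long as the exact delivery step is not taken. -/
lemma mem_buffer_preserved (C : Config I) (H : List (Step n I.Msg)) (p : Fin n) (m : I.Msg)
    (hH : ApplicableHist I C H) (hfree : ∀ s ∈ H, s ≠ (p, some m))
    (hmem : (p, m) ∈ C.buffer) : (p, m) ∈ (applyHist I C H).buffer := by
  induction H generalizing C with
  | nil => exact hmem
  | cons e H ih =>
    refine ih (applyStep I C e) hH.2 (fun s hs => hfree s (List.mem_cons_of_mem _ hs)) ?_
    have he : e ≠ (p, some m) := hfree e (List.mem_cons_self)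
    obtain ⟨q, mo⟩ := e
    rcases mo with _ | me
    · simp only [applyStep]
      exact Multiset.mem_add.2 (Or.inl hmem)
    · simp only [applyStep]
      refine Multiset.mem_add.2 (Or.inl ?_)
      have : (p, m) ≠ (q, me) := by
        intro hc
        rw [Prod.mk.injEq] at hc
        exact he (by rw [Prod.mk.injEq]; exact ⟨hc.1.symm, by rw [hc.2]⟩)
      exact (Multiset.mem_erase_of_ne this).2 hmem

lemma applicable_preserved (C : Config I) (H : List (Step n I.Msg)) (e : Step n I.Msg)
    (hH : ApplicableHist I C H) (hfree : ∀ s ∈ H, s ≠ e) (he : Applicable I C e) :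
    Applicable I (applyHist I C H) e := by
  obtain ⟨p, mo⟩ := e
  rcases mo with _ | m
  · trivial
  · exact mem_buffer_preserved I C H p m hH hfree he

end Plumbing

end MP
namespace MP

open scoped Classical

section Swap

variable {n : ℕ} {Op Val : Type} (I : Impl n Op Val)

/-- Steps by distinct processes commute. -/
lemma swap_step (C : Config I) (e d : Step n I.Msg) (hne : e.1 ≠ d.1)
    (he : Applicable I C e) (hd : Applicable I C d) :
    Applicable I (applyStep I C e) d ∧ Applicable I (applyStep I C d) e ∧
    applyStep I (applyStep I C e) d = applyStep I (applyStep I C d) e ∧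
    stepEvent I (applyStep I C d) e = stepEvent I C e ∧
    stepEvent I (applyStep I C e) d = stepEvent I C d := by
  have hse : (applyStep I C e).states d.1 = C.states d.1 :=
    applyStep_states_ne I C e (Ne.symm hne)
  have hsd : (applyStep I C d).states e.1 = C.states e.1 :=
    applyStep_states_ne I C d hne
  have hApp : ∀ (x y : Step n I.Msg), x.1 ≠ y.1 → Applicable I C y →
      Applicable I (applyStep I C x) y := by
    intro x y hxy hy
    obtain ⟨q, mo⟩ := y
    rcases mo with _ | m
    · trivial
    · simp only [Applicable] at hy ⊢
      simp only [applyStep]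
      refine Multiset.mem_add.2 (Or.inl ?_)
      rcases hx2 : x.2 with _ | mx
      · exact hy
      · refine (Multiset.mem_erase_of_ne ?_).2 hy
        intro hc
        rw [Prod.mk.injEq] at hc
        exact hxy (by simp [← hc.1])
  refine ⟨hApp e d hne hd, hApp d e (Ne.symm hne) he, ?_, ?_, ?_⟩
  · apply Config.ext' I
    · funext p
      simp only [applyStep]
      rw [Function.update_of_ne (Ne.symm hne), Function.update_of_ne hne,
        Function.update_comm hne]
    · simp only [applyStep]
      rw [Function.update_of_ne (Ne.symm hne), Function.update_of_ne hne]
      rcases he2 : e.2 with _ | me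
      · rcases hd2 : d.2 with _ | md
        · simp only [he2, hd2]
          abel
        · have hmd : (d.1, md) ∈ C.buffer := by rw [Applicable, hd2] at hd; exact hd
          simp only [he2, hd2]
          rw [Multiset.erase_add_left_pos _ hmd]
          abel
      · rcases hd2 : d.2 with _ | md
        · have hme : (e.1, me) ∈ C.buffer := by rw [Applicable, he2] at he; exact he
          simp only [he2, hd2]
          rw [Multiset.erase_add_left_pos _ hme]
          abel
        · have hmd : (d.1, md) ∈ C.buffer := by rw [Applicable, hd2] at hd; exact hd
          have hme : (e.1, me) ∈ C.buffer := by rw [Applicable, he2] at he; exact he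
          have hmd' : (d.1, md) ∈ C.buffer.erase (e.1, me) := by
            refine (Multiset.mem_erase_of_ne ?_).2 hmd
            intro hc; rw [Prod.mk.injEq] at hc; exact hne hc.1.symm
          have hme' : (e.1, me) ∈ C.buffer.erase (d.1, md) := by
            refine (Multiset.mem_erase_of_ne ?_).2 hme
            intro hc; rw [Prod.mk.injEq] at hc; exact hne hc.1
          simp only [he2, hd2]
          rw [Multiset.erase_add_left_pos _ hmd', Multiset.erase_add_left_pos _ hme',
            Multiset.erase_comm]
          abel
  · rw [stepEvent_eq, stepEvent_eq, hsd]
  · rw [stepEvent_eq, stepEvent_eq, hse]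

/-- A step commutes with a finite history of steps by other processes. -/
lemma multi_swap (C : Config I) (e : Step n I.Msg) (π : List (Step n I.Msg))
    (hfree : ∀ s ∈ π, s.1 ≠ e.1) (he : Applicable I C e) (hπ : ApplicableHist I C π) :
    ApplicableHist I (applyStep I C e) π ∧ Applicable I (applyHist I C π) e ∧
    applyHist I (applyStep I C e) π = applyStep I (applyHist I C π) e ∧
    stepEvent I (applyHist I C π) e = stepEvent I C e ∧
    runEvents I (applyStep I C e) π = runEvents I C π := by
  induction π generalizing C with
  | nil => exact ⟨trivial, he, rfl, rfl, rfl⟩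
  | cons d π ih =>
    have hd : Applicable I C d := hπ.1
    have hdne : e.1 ≠ d.1 := Ne.symm (hfree d (List.mem_cons_self))
    obtain ⟨h1, h2, h3, h4, h5⟩ := swap_step I C e d hdne he hd
    obtain ⟨ih1, ih2, ih3, ih4, ih5⟩ :=
      ih (applyStep I C d) (fun s hs => hfree s (List.mem_cons_of_mem _ hs)) h2 hπ.2
    refine ⟨⟨h1, by rw [h3]; exact ih1⟩, ih2, ?_, ih4.trans h4, ?_⟩
    · show applyHist I (applyStep I (applyStep I C e) d) π = _
      rw [h3]
      exact ih3
    · show (stepEvent I (applyStep I C e) d).toList ++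
        runEvents I (applyStep I (applyStep I C e) d) π = _
      rw [h5, h3, ih5]
      rfl

end Swap

end MP
namespace MP

section LinLemmas

variable {n : ℕ} {I : Impl n ToSOp Bool} {p0 p1 : Fin n}
  {f : List (Step n I.Msg) → List (Event ToSOp Bool)}

lemma completion_mem {E L' : List (Event ToSOp Bool)} (hc : IsCompletion E L') :
    ∀ x ∈ L', x ∈ E ∨ ∃ o v, x = Event.res o v ∧ Pending o E := by
  obtain ⟨removed, R, hrem, hR, hpend, hnd, rfl⟩ := hc
  intro x hx
  rcases List.mem_append.1 hx with hx | hx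
  · exact Or.inl (List.mem_filter.1 hx).1
  · obtain ⟨o, v, rfl, hp, -⟩ := hR x hx
    exact Or.inr ⟨o, v, rfl, hp⟩

lemma completion_mem_of_completed {E L' : List (Event ToSOp Bool)} (hc : IsCompletion E L')
    {o : ToSOp} (h : Completed o E) :
    Event.inv o ∈ L' ∧ ∀ v, Event.res o v ∈ E → Event.res o v ∈ L' := by
  obtain ⟨removed, R, hrem, hR, hpend, hnd, rfl⟩ := hc
  have hnp : ¬ Pending o E := by
    rintro ⟨-, hp⟩
    obtain ⟨v, hv⟩ := h.2
    exact hp v hv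
  have hro : removed o = false := by
    cases hr : removed o with
    | false => rfl
    | true => exact absurd (hrem o hr) hnp
  constructor
  · exact List.mem_append.2 (Or.inl (List.mem_filter.2 ⟨h.1, by simp [Event.opOf, hro]⟩))
  · intro v hv
    exact List.mem_append.2 (Or.inl (List.mem_filter.2 ⟨hv, by simp [Event.opOf, hro]⟩))

variable (halg : ToSAlg I p0 p1) (hlin : IsLinearizationFn I ToSSpec f)

include hlin in
lemma f_inv_mem {H : List (Step n I.Msg)} {o : ToSOp} (hH : H ∈ Histories I)
    (h : Event.inv o ∈ f H) : Event.inv o ∈ events I H := by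
  obtain ⟨-, ⟨L', hc, hmem, -⟩, -⟩ := hlin H hH
  rcases completion_mem hc _ ((hmem _).1 h) with h' | ⟨o', v', h', -⟩
  · exact h'
  · cases h'

include hlin in
lemma f_res_mem {H : List (Step n I.Msg)} {o : ToSOp} {v : Bool} (hH : H ∈ Histories I)
    (h : Event.res o v ∈ f H) : Event.res o v ∈ events I H ∨ Pending o (events I H) := by
  obtain ⟨-, ⟨L', hc, hmem, -⟩, -⟩ := hlin H hH
  rcases completion_mem hc _ ((hmem _).1 h) with h' | ⟨o', v', h', hp⟩
  · exact Or.inl h'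
  · cases h'
    exact Or.inr hp

include hlin in
lemma completed_inv_f {H : List (Step n I.Msg)} {o : ToSOp} (hH : H ∈ Histories I)
    (h : Completed o (events I H)) : Event.inv o ∈ f H := by
  obtain ⟨-, ⟨L', hc, hmem, -⟩, -⟩ := hlin H hH
  exact (hmem _).2 (completion_mem_of_completed hc h).1

include halg hlin in
lemma res_mem_f {H : List (Step n I.Msg)} {o : ToSOp} {v : Bool} (hH : H ∈ Histories I)
    (h : Event.res o v ∈ events I H) : Event.res o v ∈ f H := by
  obtain ⟨-, ⟨L', hc, hmem, -⟩, -⟩ := hlin H hH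
  have hinv : Event.inv o ∈ events I H := (halg.wellFormed H hH).2.2 o v h
  exact (hmem _).2 ((completion_mem_of_completed hc ⟨hinv, v, h⟩).2 v h)

include halg in
lemma res_test_val_unique {H : List (Step n I.Msg)} (hH : H ∈ Histories I) {v w : Bool}
    (hv : Event.res ToSOp.test v ∈ events I H)
    (hw : Event.res ToSOp.test w ∈ events I H) : v = w := by
  obtain ⟨⟨i, hi⟩, hgi⟩ := List.mem_iff_get.1 hv
  obtain ⟨⟨j, hj⟩, hgj⟩ := List.mem_iff_get.1 hw
  have := (halg.wellFormed H hH).2.1 ToSOp.test i j hi hj v w hgi hgj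
  subst this
  rw [hgi] at hgj
  cases hgj
  rfl

/-- `Forced I H v`: in every extension of `H`, the TEST operation can only return `v`. -/
def Forced (I : Impl n ToSOp Bool) (H : List (Step n I.Msg)) (v : Bool) : Prop :=
  ∀ H', (H ++ H') ∈ Histories I →
    ∀ w, Event.res ToSOp.test w ∈ events I (H ++ H') → w = v

lemma forced_extend {H Y : List (Step n I.Msg)} {v : Bool} (h : Forced I H v) :
    Forced I (H ++ Y) v := by
  intro H' hh w hw
  rw [List.append_assoc] at hh hw
  exact h (Y ++ H') hh w hw

include halg in
lemma forced_of_res {H : List (Step n I.Msg)} {v : Bool} (hres : Event.res ToSOp.test v ∈ events I H) :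
    Forced I H v := by
  intro H' hh w hw
  have : Event.res ToSOp.test v ∈ events I (H ++ H') := by
    rw [events_append]; exact List.mem_append.2 (Or.inl hres)
  exact res_test_val_unique halg hh hw this

variable (hmono : ∀ G H, G ∈ Histories I → H ∈ Histories I → G <+: H → f G <+: f H)

include halg hlin hmono in
lemma forced_true_of_f {H : List (Step n I.Msg)} (hH : H ∈ Histories I)
    (hset : Event.inv ToSOp.set ∈ f H)
    (hnores : ∀ w, Event.res ToSOp.test w ∉ f H) : Forced I H true := by
  intro H' hh w hw
  have hpre : f H <+: f (H ++ H') := hmono H (H ++ H') hH hh ⟨H', rfl⟩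
  have hwf : Event.res ToSOp.test w ∈ f (H ++ H') := res_mem_f halg hlin hh hw
  obtain ⟨⟨j, hj⟩, hgj⟩ := List.mem_iff_get.1 hwf
  obtain ⟨⟨i, hi⟩, hgi⟩ := List.mem_iff_get.1 hset
  have hij : i < j := by
    rcases Nat.lt_or_ge j (f H).length with hlt | hge
    · exfalso
      apply hnores w
      have : (f (H ++ H')).get ⟨j, hj⟩ = (f H).get ⟨j, hlt⟩ := by
        simp only [List.get_eq_getElem]
        exact (hpre.getElem hlt).symm
      rw [this] at hgj
      rw [← hgj]
      exact List.get_mem _ _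
    · exact Nat.lt_of_lt_of_le hi hge
  have hspec := (hlin (H ++ H') hh).2.2 j hj w hgj
  refine hspec.2 ⟨i, Nat.lt_trans hij hj, hij, ?_⟩
  have : (f (H ++ H')).get ⟨i, Nat.lt_trans hij hj⟩ = (f H).get ⟨i, hi⟩ := by
    simp only [List.get_eq_getElem]
    exact (hpre.getElem hi).symm
  rw [this, hgi]

include halg hlin hmono in
lemma forced_of_f_res {H : List (Step n I.Msg)} {w : Bool} (hH : H ∈ Histories I)
    (hres : Event.res ToSOp.test w ∈ f H) : Forced I H w := by
  intro H' hh w' hw'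
  have hmem : Event.res ToSOp.test w ∈ f (H ++ H') :=
    (hmono H (H ++ H') hH hh ⟨H', rfl⟩).subset hres
  rcases f_res_mem hlin hh hmem with h' | h'
  · exact res_test_val_unique halg hh hw' h'
  · exact absurd hw' (h'.2 w')

include halg hlin in
lemma res_false_of_no_set {H : List (Step n I.Msg)} {v : Bool} (hH : H ∈ Histories I)
    (hres : Event.res ToSOp.test v ∈ events I H)
    (hnoset : Event.inv ToSOp.set ∉ events I H) : v = false := by
  have hf : Event.res ToSOp.test v ∈ f H := res_mem_f halg hlin hH hres
  obtain ⟨⟨j, hj⟩, hgj⟩ := List.mem_iff_get.1 hf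
  have hspec := (hlin H hH).2.2 j hj v hgj
  cases v
  · rfl
  · exfalso
    obtain ⟨i, hi, -, hgi⟩ := hspec.1 rfl
    exact hnoset (f_inv_mem hlin hH (hgi ▸ List.get_mem _ _))

include halg hlin in
lemma committed_after_set {H : List (Step n I.Msg)} (hH : H ∈ Histories I)
    (hset : Completed ToSOp.set (events I H))
    (hnotest : Event.inv ToSOp.test ∉ events I H) :
    Event.inv ToSOp.set ∈ f H ∧ ∀ w, Event.res ToSOp.test w ∉ f H := by
  refine ⟨completed_inv_f hlin hH hset, fun w hw => ?_⟩
  rcases f_res_mem hlin hH hw with h' | h'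
  · exact hnotest ((halg.wellFormed H hH).2.2 ToSOp.test w h')
  · exact hnotest h'.1

end LinLemmas

end MP
namespace MP

open scoped Classical

section Scheduler

variable {n : ℕ} {Op Val : Type} (I : Impl n Op Val)

/-- One service phase for process `r`: try to deliver each message in `L` to `r`
(preceded by an adversary-chosen finite history), then take a null step of `rfinal`. -/
noncomputable def stageGo (adv : List (Step n I.Msg) → Step n I.Msg → List (Step n I.Msg))
    (r rfinal : Fin n) : List I.Msg → List (Step n I.Msg) → List (Step n I.Msg)
  | [], H => adv H (rfinal, none) ++ [(rfinal, none)]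
  | m :: L, H =>
      if (r, m) ∈ (applyHist I (initConfig I) H).buffer then
        (adv H (r, some m) ++ [(r, some m)]) ++
          stageGo adv r rfinal L (H ++ (adv H (r, some m) ++ [(r, some m)]))
      else stageGo adv r rfinal L H

variable (live : Fin n → Prop) (pdef : Fin n)
  (adv : List (Step n I.Msg) → Step n I.Msg → List (Step n I.Msg)) (rho : ℕ → Fin n)

/-- The steps of stage `t`, starting from accumulated history `H`. -/
noncomputable def stageSteps (t : ℕ) (H : List (Step n I.Msg)) : List (Step n I.Msg) :=
  if live (rho t) then
    stageGo I adv (rho t) (rho t)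
      ((((applyHist I (initConfig I) H).buffer.filter (fun x => x.1 = rho t)).toList).map
        Prod.snd) H
  else stageGo I adv (rho t) pdef [] H

/-- The accumulated history after `t` stages. -/
noncomputable def chain (H₀ : List (Step n I.Msg)) : ℕ → List (Step n I.Msg)
  | 0 => H₀
  | t + 1 => chain H₀ t ++ stageSteps I live pdef adv rho t (chain H₀ t)

/-- The infinite schedule obtained by flattening the chain. -/
noncomputable def sched (H₀ : List (Step n I.Msg)) (k : ℕ) : Step n I.Msg :=
  (chain I live pdef adv rho H₀ (k + 1)).getD (H₀.length + k) (pdef, none)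

lemma stageGo_length_pos (r rfinal : Fin n) (L : List I.Msg) (H : List (Step n I.Msg)) :
    0 < (stageGo I adv r rfinal L H).length := by
  induction L generalizing H with
  | nil => simp [stageGo]
  | cons m L ih =>
    rw [stageGo]
    split
    · simp
    · exact ih H

lemma stageGo_final_mem (r rfinal : Fin n) (L : List I.Msg) (H : List (Step n I.Msg)) :
    (rfinal, (none : Option I.Msg)) ∈ stageGo I adv r rfinal L H := by
  induction L generalizing H with
  | nil => simp [stageGo]
  | cons m L ih =>
    rw [stageGo]
    split
    · exact List.mem_append.2 (Or.inr (ih _))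
    · exact ih H

lemma chain_prefix (H₀ : List (Step n I.Msg)) {t t' : ℕ} (h : t ≤ t') :
    chain I live pdef adv rho H₀ t <+: chain I live pdef adv rho H₀ t' := by
  induction t' with
  | zero => rw [Nat.le_zero.1 h]
  | succ t' ih =>
    rcases Nat.lt_or_ge t (t' + 1) with h' | h'
    · exact (ih (Nat.lt_succ_iff.1 h')).trans (by rw [chain]; exact List.prefix_append _ _)
    · rw [Nat.le_antisymm h h']

lemma chain_length (H₀ : List (Step n I.Msg)) (t : ℕ) :
    H₀.length + t ≤ (chain I live pdef adv rho H₀ t).length := by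
  induction t with
  | zero => simp [chain]
  | succ t ih =>
    rw [chain, List.length_append]
    have := stageGo_length_pos I adv (rho t) (rho t) (((((applyHist I (initConfig I)
      (chain I live pdef adv rho H₀ t)).buffer.filter
        (fun x => x.1 = rho t)).toList).map Prod.snd)) (chain I live pdef adv rho H₀ t)
    have h2 := stageGo_length_pos I adv (rho t) pdef [] (chain I live pdef adv rho H₀ t)
    unfold stageSteps
    split <;> omega

lemma sched_eq_get (H₀ : List (Step n I.Msg)) {k t : ℕ}
    (h : H₀.length + k < (chain I live pdef adv rho H₀ t).length) :
    sched I live pdef adv rho H₀ k = (chain I live pdef adv rho H₀ t)[H₀.length + k] := by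
  have hk1 : H₀.length + k < (chain I live pdef adv rho H₀ (k + 1)).length :=
    Nat.lt_of_lt_of_le (by omega) (chain_length I live pdef adv rho H₀ (k + 1))
  rw [sched, List.getD_eq_getElem _ _ hk1]
  rcases Nat.le_total (k + 1) t with hle | hle
  · exact (chain_prefix I live pdef adv rho H₀ hle).getElem hk1
  · exact ((chain_prefix I live pdef adv rho H₀ hle).getElem h).symm

lemma chain_take (H₀ : List (Step n I.Msg)) (k : ℕ) {t : ℕ}
    (h : H₀.length + k ≤ (chain I live pdef adv rho H₀ t).length) :
    H₀ ++ prefixSteps (sched I live pdef adv rho H₀) k =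
      (chain I live pdef adv rho H₀ t).take (H₀.length + k) := by
  induction k with
  | zero =>
    obtain ⟨rest, hrest⟩ := chain_prefix I live pdef adv rho H₀ (Nat.zero_le t)
    rw [chain] at hrest
    rw [prefixSteps_zero, List.append_nil, ← hrest, Nat.add_zero, List.take_left]
  | succ k ih =>
    have hk : H₀.length + k ≤ (chain I live pdef adv rho H₀ t).length := by omega
    rw [prefixSteps_succ, ← List.append_assoc, ih hk,
      sched_eq_get I live pdef adv rho H₀ (t := t) (by omega)]
    show _ = List.take ((H₀.length + k) + 1) _
    rw [List.take_succ, List.getElem?_eq_getElem (by omega)]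
    rfl

end Scheduler

end MP
namespace MP

open scoped Classical

section Scheduler2

set_option linter.unusedSectionVars false

variable {n : ℕ} {Op Val : Type} (I : Impl n Op Val)
  (live : Fin n → Prop) (pdef : Fin n)
  (adv : List (Step n I.Msg) → Step n I.Msg → List (Step n I.Msg)) (rho : ℕ → Fin n)
  (P : List (Step n I.Msg) → Prop)
  (hadv : ∀ H e, H ∈ Histories I → P H → live e.1 →
    Applicable I (applyHist I (initConfig I) H) e →
    (H ++ (adv H e ++ [e])) ∈ Histories I ∧ P (H ++ (adv H e ++ [e])) ∧
      ∀ s ∈ adv H e, live s.1)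
  (hpdef : live pdef)

include hadv in
lemma stageGo_inv (r rfinal : Fin n) (hrf : live rfinal) :
    ∀ (L : List I.Msg) (H : List (Step n I.Msg)), H ∈ Histories I → P H →
      (∀ m ∈ L, live r) →
      (H ++ stageGo I adv r rfinal L H) ∈ Histories I ∧
        P (H ++ stageGo I adv r rfinal L H) ∧
        ∀ s ∈ stageGo I adv r rfinal L H, live s.1 := by
  intro L
  induction L with
  | nil =>
    intro H hH hP _
    obtain ⟨h1, h2, h3⟩ := hadv H (rfinal, none) hH hP hrf trivial
    refine ⟨h1, h2, fun s hs => ?_⟩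
    rcases List.mem_append.1 hs with hs | hs
    · exact h3 s hs
    · rw [List.mem_singleton.1 hs]; exact hrf
  | cons m L ih =>
    intro H hH hP hlr
    rw [stageGo]
    split
    · next hbuf =>
      obtain ⟨hH', hP', hσ⟩ :=
        hadv H (r, some m) hH hP (hlr m (List.mem_cons_self)) hbuf
      obtain ⟨a, b, c⟩ := ih _ hH' hP' (fun m' hm' => hlr m' (List.mem_cons_of_mem _ hm'))
      simp only [← List.append_assoc] at a b ⊢
      refine ⟨a, b, fun s hs => ?_⟩
      simp only [List.append_assoc] at hs
      rcases List.mem_append.1 hs with hs | hs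
      · exact hσ s hs
      · rcases List.mem_append.1 hs with hs | hs
        · rw [List.mem_singleton.1 hs]; exact hlr m (List.mem_cons_self)
        · exact c s hs
    · exact ih H hH hP (fun m' hm' => hlr m' (List.mem_cons_of_mem _ hm'))

include hadv hpdef in
lemma stageSteps_inv (t : ℕ) (H : List (Step n I.Msg)) (hH : H ∈ Histories I) (hP : P H) :
    (H ++ stageSteps I live pdef adv rho t H) ∈ Histories I ∧
      P (H ++ stageSteps I live pdef adv rho t H) ∧
      ∀ s ∈ stageSteps I live pdef adv rho t H, live s.1 := by
  unfold stageSteps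
  split
  · next hl => exact stageGo_inv I live adv P hadv _ _ hl _ H hH hP (fun _ _ => hl)
  · exact stageGo_inv I live adv P hadv _ _ hpdef [] H hH hP (by simp)

variable (H₀ : List (Step n I.Msg)) (hH₀ : H₀ ∈ Histories I) (hP₀ : P H₀)

include hadv hpdef hH₀ hP₀ in
lemma chain_invariant (t : ℕ) :
    chain I live pdef adv rho H₀ t ∈ Histories I ∧ P (chain I live pdef adv rho H₀ t) := by
  induction t with
  | zero => exact ⟨hH₀, hP₀⟩
  | succ t ih =>
    obtain ⟨a, b, -⟩ := stageSteps_inv I live pdef adv rho P hadv hpdef t _ ih.1 ih.2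
    exact ⟨a, b⟩

include hadv hpdef hH₀ hP₀ in
lemma chain_live (t : ℕ) :
    ∀ i (hi : i < (chain I live pdef adv rho H₀ t).length), H₀.length ≤ i →
      live ((chain I live pdef adv rho H₀ t)[i]).1 := by
  induction t with
  | zero => intro i hi hge; simp only [chain] at hi; omega
  | succ t ih =>
    intro i hi hge
    simp only [chain] at hi ⊢
    rcases Nat.lt_or_ge i (chain I live pdef adv rho H₀ t).length with h | h
    · rw [List.getElem_append_left h]
      exact ih i h hge
    · rw [List.getElem_append_right h]
      have hchain := chain_invariant I live pdef adv rho P hadv hpdef H₀ hH₀ hP₀ t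
      have := (stageSteps_inv I live pdef adv rho P hadv hpdef t _ hchain.1 hchain.2).2.2
      exact this _ (List.getElem_mem _)

include hadv hpdef hH₀ hP₀ in
lemma sched_live (k : ℕ) : live (sched I live pdef adv rho H₀ k).1 := by
  have hlen := chain_length I live pdef adv rho H₀ (k + 1)
  have hlt : H₀.length + k < (chain I live pdef adv rho H₀ (k + 1)).length := by omega
  rw [sched_eq_get I live pdef adv rho H₀ hlt]
  exact chain_live I live pdef adv rho P hadv hpdef H₀ hH₀ hP₀ (k + 1) _ hlt (by omega)

include hadv hpdef hH₀ hP₀ in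
lemma stage_mem_sched (t : ℕ) {x : Step n I.Msg}
    (hx : x ∈ stageSteps I live pdef adv rho t (chain I live pdef adv rho H₀ t)) :
    ∃ k ≥ t, sched I live pdef adv rho H₀ k = x := by
  obtain ⟨j, hj, hgj⟩ := List.mem_iff_getElem.1 hx
  have hlen := chain_length I live pdef adv rho H₀ t
  set c := (chain I live pdef adv rho H₀ t).length with hc
  have hi : c + j < (chain I live pdef adv rho H₀ (t + 1)).length := by
    rw [chain, List.length_append]; omega
  have hget : (chain I live pdef adv rho H₀ (t + 1))[c + j] = x := by
    simp only [chain]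
    rw [List.getElem_append_right (by omega)]
    convert hgj using 2; omega
  refine ⟨c + j - H₀.length, by omega, ?_⟩
  have heq : H₀.length + (c + j - H₀.length) = c + j := by omega
  have h2 : H₀.length + (c + j - H₀.length) <
      (chain I live pdef adv rho H₀ (t + 1)).length := by omega
  have hget2 : (chain I live pdef adv rho H₀ (t + 1))[c + j]? = some x := by
    rw [List.getElem?_eq_getElem hi]; exact congrArg some hget
  rw [sched_eq_get I live pdef adv rho H₀ h2]
  have h3 : (chain I live pdef adv rho H₀ (t + 1))[H₀.length + (c + j - H₀.length)]? =
      some x := by rw [heq]; exact hget2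
  rw [List.getElem?_eq_getElem h2] at h3
  exact Option.some.inj h3

include hadv hpdef hH₀ hP₀ in
lemma sched_correctProc (hrho : ∀ (p : Fin n) (k : ℕ), ∃ t ≥ k, rho t = p)
    (p : Fin n) (hp : live p) : CorrectProc p (sched I live pdef adv rho H₀) := by
  intro k
  obtain ⟨t, ht, hrt⟩ := hrho p k
  have hmem : (p, (none : Option I.Msg)) ∈
      stageSteps I live pdef adv rho t (chain I live pdef adv rho H₀ t) := by
    unfold stageSteps
    rw [hrt, if_pos hp]
    exact stageGo_final_mem I adv p p _ _
  obtain ⟨k', hk', hs⟩ :=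
    stage_mem_sched I live pdef adv rho P hadv hpdef H₀ hH₀ hP₀ t hmem
  exact ⟨k', by omega, by rw [hs]⟩

include hadv hpdef hH₀ hP₀ in
lemma sched_crash {q : Fin n} (hq : ¬ live q) :
    ¬ CorrectProc q (sched I live pdef adv rho H₀) := by
  intro hc
  obtain ⟨k', -, hk'⟩ := hc 0
  exact hq (hk' ▸ sched_live I live pdef adv rho P hadv hpdef H₀ hH₀ hP₀ k')

include hadv hpdef hH₀ hP₀ in
lemma sched_hist (k : ℕ) :
    (H₀ ++ prefixSteps (sched I live pdef adv rho H₀) k) ∈ Histories I := by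
  have hlen := chain_length I live pdef adv rho H₀ (k + 1)
  rw [chain_take I live pdef adv rho H₀ k (t := k + 1) (by omega)]
  exact hist_prefix I (List.take_prefix _ _)
    (chain_invariant I live pdef adv rho P hadv hpdef H₀ hH₀ hP₀ (k + 1)).1

include hadv hpdef hH₀ hP₀ in
lemma sched_infApplicable :
    InfApplicable I (applyHist I (initConfig I) H₀) (sched I live pdef adv rho H₀) := by
  intro k
  have hlen := chain_length I live pdef adv rho H₀ (k + 1)
  have hlt : H₀.length + k < (chain I live pdef adv rho H₀ (k + 1)).length := by omega
  have happ : ApplicableHist I (initConfig I) (chain I live pdef adv rho H₀ (k + 1)) :=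
    (chain_invariant I live pdef adv rho P hadv hpdef H₀ hH₀ hP₀ (k + 1)).1
  have := applicable_at I (initConfig I) _ happ _ hlt
  rw [← applyHist_append, chain_take I live pdef adv rho H₀ k (t := k + 1) (by omega),
    sched_eq_get I live pdef adv rho H₀ hlt]
  simpa using this

include hadv hpdef hH₀ hP₀ in
lemma sched_checkpoint (k : ℕ) :
    ∃ k' ≥ k, ∃ t, H₀ ++ prefixSteps (sched I live pdef adv rho H₀) k' =
      chain I live pdef adv rho H₀ t := by
  have hlen := chain_length I live pdef adv rho H₀ (k + 1)
  refine ⟨(chain I live pdef adv rho H₀ (k + 1)).length - H₀.length, by omega, k + 1, ?_⟩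
  rw [chain_take I live pdef adv rho H₀ _ (t := k + 1) (by omega)]
  have : H₀.length + ((chain I live pdef adv rho H₀ (k + 1)).length - H₀.length) =
      (chain I live pdef adv rho H₀ (k + 1)).length := by omega
  rw [this, List.take_length]

end Scheduler2

end MP
namespace MP

open scoped Classical

section Scheduler3

set_option linter.unusedSectionVars false

variable {n : ℕ} {Op Val : Type} (I : Impl n Op Val)
  (live : Fin n → Prop) (pdef : Fin n)
  (adv : List (Step n I.Msg) → Step n I.Msg → List (Step n I.Msg)) (rho : ℕ → Fin n)
  (P : List (Step n I.Msg) → Prop)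
  (hadv : ∀ H e, H ∈ Histories I → P H → live e.1 →
    Applicable I (applyHist I (initConfig I) H) e →
    (H ++ (adv H e ++ [e])) ∈ Histories I ∧ P (H ++ (adv H e ++ [e])) ∧
      ∀ s ∈ adv H e, live s.1)
  (hpdef : live pdef)

include hadv in
lemma stageGo_fair (r rfinal : Fin n) (m : I.Msg) :
    ∀ (L : List I.Msg) (H : List (Step n I.Msg)), H ∈ Histories I → P H →
      (∀ m' ∈ L, live r) → m ∈ L →
      (r, m) ∈ (applyHist I (initConfig I) H).buffer →
      (∀ s ∈ stageGo I adv r rfinal L H, s ≠ (r, some m)) → False := by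
  intro L
  induction L with
  | nil => intro H _ _ _ hm; simp at hm
  | cons m' L ih =>
    intro H hH hP hlr hm hbuf hsteps
    rw [stageGo] at hsteps
    by_cases hb : (r, m') ∈ (applyHist I (initConfig I) H).buffer
    · rw [if_pos hb] at hsteps
      by_cases hmm : m' = m
      · subst hmm
        exact hsteps (r, some m')
          (List.mem_append.2 (Or.inl (List.mem_append.2 (Or.inr (List.mem_singleton.2 rfl)))))
          rfl
      · have hmL : m ∈ L := by
          rcases List.mem_cons.1 hm with h | h
          · exact absurd h.symm hmm
          · exact h
        obtain ⟨hH', hP', -⟩ :=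
          hadv H (r, some m') hH hP (hlr m' (List.mem_cons_self)) hb
        have happ : ApplicableHist I (applyHist I (initConfig I) H)
            (adv H (r, some m') ++ [(r, some m')]) := ((hist_append I).1 hH').2
        have hbuf' : (r, m) ∈ (applyHist I (initConfig I)
            (H ++ (adv H (r, some m') ++ [(r, some m')]))).buffer := by
          rw [applyHist_append]
          refine mem_buffer_preserved I _ _ r m happ (fun s hs => ?_) hbuf
          exact hsteps s (List.mem_append.2 (Or.inl hs))
        refine ih (H ++ (adv H (r, some m') ++ [(r, some m')])) hH' hP'
          (fun x hx => hlr x (List.mem_cons_of_mem _ hx)) hmL hbuf' (fun s hs => ?_)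
        exact hsteps s (List.mem_append.2 (Or.inr hs))
    · rw [if_neg hb] at hsteps
      by_cases hmm : m' = m
      · subst hmm; exact hb hbuf
      · have hmL : m ∈ L := by
          rcases List.mem_cons.1 hm with h | h
          · exact absurd h.symm hmm
          · exact h
        exact ih H hH hP (fun x hx => hlr x (List.mem_cons_of_mem _ hx)) hmL hbuf hsteps

variable (H₀ : List (Step n I.Msg)) (hH₀ : H₀ ∈ Histories I) (hP₀ : P H₀)

include hadv hpdef hH₀ hP₀ in
lemma sched_fairDelivery (hrho : ∀ (p : Fin n) (k : ℕ), ∃ t ≥ k, rho t = p) :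
    FairDelivery I (applyHist I (initConfig I) H₀) (sched I live pdef adv rho H₀) := by
  intro k p m hcor hbuf
  by_contra hno
  push_neg at hno
  -- the process `p` is live
  have hp : live p := by
    by_contra hlp
    exact sched_crash I live pdef adv rho P hadv hpdef H₀ hH₀ hP₀ hlp hcor
  -- pick a stage `t ≥ k` serving `p`, whose start is at flat time `k₀ ≥ k`
  obtain ⟨t, ht, hrt⟩ := hrho p (H₀.length + k)
  have hlen : H₀.length + t ≤ (chain I live pdef adv rho H₀ t).length :=
    chain_length I live pdef adv rho H₀ t
  set k₀ := (chain I live pdef adv rho H₀ t).length - H₀.length with hk₀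
  have hkk : k ≤ k₀ := by omega
  have hchainEq : H₀ ++ prefixSteps (sched I live pdef adv rho H₀) k₀ =
      chain I live pdef adv rho H₀ t := by
    rw [chain_take I live pdef adv rho H₀ k₀ (t := t) (by omega)]
    have h5 : H₀.length + k₀ = (chain I live pdef adv rho H₀ t).length := by omega
    rw [h5, List.take_length]
  -- the message is still in the buffer at the start of stage t
  have hmid : (p, m) ∈ (applyHist I (initConfig I) (chain I live pdef adv rho H₀ t)).buffer := by
    rw [← hchainEq]
    have hsplit : prefixSteps (sched I live pdef adv rho H₀) k₀ =
        prefixSteps (sched I live pdef adv rho H₀) k ++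
          prefixSteps (fun i => sched I live pdef adv rho H₀ (k + i)) (k₀ - k) := by
      rw [← prefixSteps_add]
      congr 1
      omega
    rw [hsplit, ← List.append_assoc, applyHist_append]
    have happ : ApplicableHist I
        (applyHist I (initConfig I) (H₀ ++ prefixSteps (sched I live pdef adv rho H₀) k))
        (prefixSteps (fun i => sched I live pdef adv rho H₀ (k + i)) (k₀ - k)) := by
      have h6 := (chain_invariant I live pdef adv rho P hadv hpdef H₀ hH₀ hP₀ t).1
      rw [← hchainEq, hsplit, ← List.append_assoc] at h6
      exact ((hist_append I).1 h6).2
    refine mem_buffer_preserved I _ _ p m happ (fun s hs => ?_) ?_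
    · simp only [prefixSteps, List.mem_map, List.mem_range] at hs
      obtain ⟨j, -, rfl⟩ := hs
      exact hno (k + j) (by omega)
    · rw [applyHist_append]
      exact hbuf
  -- apply the stage fairness lemma
  have hCmem := (chain_invariant I live pdef adv rho P hadv hpdef H₀ hH₀ hP₀ t)
  have hmL : m ∈ (((applyHist I (initConfig I) (chain I live pdef adv rho H₀ t)).buffer.filter
      (fun x => x.1 = p)).toList).map Prod.snd := by
    refine List.mem_map.2 ⟨(p, m), ?_, rfl⟩
    rw [Multiset.mem_toList, Multiset.mem_filter]
    exact ⟨hmid, rfl⟩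
  have hstage : stageSteps I live pdef adv rho t (chain I live pdef adv rho H₀ t) =
      stageGo I adv p p ((((applyHist I (initConfig I)
        (chain I live pdef adv rho H₀ t)).buffer.filter
        (fun x => x.1 = p)).toList).map Prod.snd) (chain I live pdef adv rho H₀ t) := by
    unfold stageSteps
    rw [hrt, if_pos hp]
  refine stageGo_fair I live adv P hadv p p m _ _ hCmem.1 hCmem.2
    (fun _ _ => hp) hmL hmid (fun s hs hseq => ?_)
  rw [← hstage] at hs
  obtain ⟨k', hk', hsk⟩ :=
    stage_mem_sched I live pdef adv rho P hadv hpdef H₀ hH₀ hP₀ t hs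
  exact hno k' (by omega) (by rw [hsk, hseq])

end Scheduler3

end MP
namespace MP

open scoped Classical

section Package

variable {n : ℕ} {Op Val : Type} {I : Impl n Op Val}

/-- Packaged scheduler: a fair 1-crash schedule maintaining an invariant `P`. -/
lemma exists_fair_schedule (live : Fin n → Prop) (pdef : Fin n) (hpdef : live pdef)
    (hcrash : ∀ p q : Fin n, ¬live p → ¬live q → p = q)
    (P : List (Step n I.Msg) → Prop)
    (hADV : ∀ H e, H ∈ Histories I → P H → live e.1 →
      Applicable I (applyHist I (initConfig I) H) e →
      ∃ σ, (H ++ (σ ++ [e])) ∈ Histories I ∧ P (H ++ (σ ++ [e])) ∧ ∀ s ∈ σ, live s.1)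
    (H₀ : List (Step n I.Msg)) (hH₀ : H₀ ∈ Histories I) (hP₀ : P H₀) :
    ∃ S : ℕ → Step n I.Msg,
      InfApplicable I (applyHist I (initConfig I) H₀) S ∧ AtMostOneCrash S ∧
      (∀ p, live p → CorrectProc p S) ∧
      FairDelivery I (applyHist I (initConfig I) H₀) S ∧
      (∀ k, (H₀ ++ prefixSteps S k) ∈ Histories I) ∧
      (∀ k, live (S k).1) ∧
      (∀ k, ∃ k' ≥ k, P (H₀ ++ prefixSteps S k')) := by
  have hn : 0 < n := pdef.pos
  set rho : ℕ → Fin n := fun t => ⟨t % n, Nat.mod_lt _ hn⟩ with hrho_def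
  have hrho : ∀ (p : Fin n) (k : ℕ), ∃ t ≥ k, rho t = p := by
    intro p k
    refine ⟨p.val + n * (k + 1), by nlinarith [p.2], ?_⟩
    simp only [hrho_def]
    exact Fin.ext (by simp [Nat.add_mul_mod_self_left, Nat.mod_eq_of_lt p.2])
  set adv : List (Step n I.Msg) → Step n I.Msg → List (Step n I.Msg) := fun H e =>
    if h : H ∈ Histories I ∧ P H ∧ live e.1 ∧ Applicable I (applyHist I (initConfig I) H) e
    then (hADV H e h.1 h.2.1 h.2.2.1 h.2.2.2).choose else [] with hadv_def
  have hadv : ∀ H e, H ∈ Histories I → P H → live e.1 →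
      Applicable I (applyHist I (initConfig I) H) e →
      (H ++ (adv H e ++ [e])) ∈ Histories I ∧ P (H ++ (adv H e ++ [e])) ∧
        ∀ s ∈ adv H e, live s.1 := by
    intro H e h1 h2 h3 h4
    have hcond : H ∈ Histories I ∧ P H ∧ live e.1 ∧
        Applicable I (applyHist I (initConfig I) H) e := ⟨h1, h2, h3, h4⟩
    simp only [hadv_def, dif_pos hcond]
    exact (hADV H e h1 h2 h3 h4).choose_spec
  refine ⟨sched I live pdef adv rho H₀, ?_, ?_, ?_, ?_, ?_, ?_, ?_⟩
  · exact sched_infApplicable I live pdef adv rho P hadv hpdef H₀ hH₀ hP₀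
  · intro p q hp hq
    have hlp : ¬ live p := fun h =>
      hp (sched_correctProc I live pdef adv rho P hadv hpdef H₀ hH₀ hP₀ hrho p h)
    have hlq : ¬ live q := fun h =>
      hq (sched_correctProc I live pdef adv rho P hadv hpdef H₀ hH₀ hP₀ hrho q h)
    exact hcrash p q hlp hlq
  · exact fun p hp =>
      sched_correctProc I live pdef adv rho P hadv hpdef H₀ hH₀ hP₀ hrho p hp
  · exact sched_fairDelivery I live pdef adv rho P hadv hpdef H₀ hH₀ hP₀ hrho
  · exact fun k => sched_hist I live pdef adv rho P hadv hpdef H₀ hH₀ hP₀ k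
  · exact fun k => sched_live I live pdef adv rho P hadv hpdef H₀ hH₀ hP₀ k
  · intro k
    obtain ⟨k', hk', t, ht⟩ :=
      sched_checkpoint I live pdef adv rho P hadv hpdef H₀ hH₀ hP₀ k
    refine ⟨k', hk', ?_⟩
    rw [ht]
    exact (chain_invariant I live pdef adv rho P hadv hpdef H₀ hH₀ hP₀ t).2

/-- Shift lemmas. -/
lemma correct_shift {S : ℕ → Step n I.Msg} {p : Fin n} (d : ℕ) (h : CorrectProc p S) :
    CorrectProc p (fun i => S (d + i)) := by
  intro k
  obtain ⟨k', hk', hp⟩ := h (d + k)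
  exact ⟨k' - d, by omega, by show (S (d + (k' - d))).1 = p; rw [show d + (k' - d) = k' by omega]; exact hp⟩

lemma correct_unshift {S : ℕ → Step n I.Msg} {p : Fin n} (d : ℕ)
    (h : CorrectProc p (fun i => S (d + i))) : CorrectProc p S := by
  intro k
  obtain ⟨k', hk', hp⟩ := h k
  exact ⟨d + k', by omega, hp⟩

lemma atMostOneCrash_shift {S : ℕ → Step n I.Msg} (d : ℕ) (h : AtMostOneCrash S) :
    AtMostOneCrash (fun i => S (d + i)) := by
  intro p q hp hq
  exact h p q (fun hc => hp (correct_shift d hc)) (fun hc => hq (correct_shift d hc))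

lemma infApplicable_shift {C : Config I} {S : ℕ → Step n I.Msg} (d : ℕ)
    (h : InfApplicable I C S) :
    InfApplicable I (applyHist I C (prefixSteps S d)) (fun i => S (d + i)) := by
  intro k
  have := h (d + k)
  rwa [prefixSteps_add, applyHist_append] at this

lemma fairDelivery_shift {C : Config I} {S : ℕ → Step n I.Msg} (d : ℕ)
    (h : FairDelivery I C S) :
    FairDelivery I (applyHist I C (prefixSteps S d)) (fun i => S (d + i)) := by
  intro k p m hcor hbuf
  have hbuf' : (p, m) ∈ (applyHist I C (prefixSteps S (d + k))).buffer := by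
    rwa [prefixSteps_add, applyHist_append]
  obtain ⟨k', hk', hs⟩ := h (d + k) p m (correct_unshift d hcor) hbuf'
  exact ⟨k' - d, by omega, by show S (d + (k' - d)) = _; rw [show d + (k' - d) = k' by omega]; exact hs⟩

end Package

section ToSHelpers

variable {n : ℕ} {I : Impl n ToSOp Bool} {p0 p1 : Fin n} (halg : ToSAlg I p0 p1)

include halg in
lemma event_proc {C : Config I} {H : List (Step n I.Msg)} {ev : Event ToSOp Bool}
    (h : ev ∈ runEvents I C H) : ∃ s ∈ H, s.1 = I.procOf ev.opOf := by
  obtain ⟨s, hs, st, st', hst⟩ := runEvents_mem I C H ev h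
  exact ⟨s, hs, (halg.events_own s.1 st st' ev hst).symm⟩

include halg in
lemma no_op_events {o : ToSOp} {C : Config I} {H : List (Step n I.Msg)}
    (hfree : ∀ s ∈ H, s.1 ≠ I.procOf o) :
    ∀ ev ∈ runEvents I C H, ev.opOf ≠ o := by
  intro ev hev heq
  obtain ⟨s, hs, hps⟩ := event_proc halg hev
  exact hfree s hs (by rw [hps, heq])

include halg in
lemma no_inv_events {o : ToSOp} {C : Config I} {H : List (Step n I.Msg)}
    (hfree : ∀ s ∈ H, s.1 ≠ I.procOf o) : Event.inv o ∉ runEvents I C H :=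
  fun h => no_op_events halg hfree _ h rfl

include halg in
lemma no_res_events {o : ToSOp} {v : Bool} {C : Config I} {H : List (Step n I.Msg)}
    (hfree : ∀ s ∈ H, s.1 ≠ I.procOf o) : Event.res o v ∉ runEvents I C H :=
  fun h => no_op_events halg hfree _ h rfl

lemma first_step_invokes {p : Fin n} {o : ToSOp}
    (hinv : ∀ m, I.eventOf p (I.init p) (I.trans p (I.init p) m).1 = some (Event.inv o)) :
    ∀ (C : Config I) (H : List (Step n I.Msg)), ApplicableHist I C H →
      C.states p = I.init p → (∃ s ∈ H, s.1 = p) → Event.inv o ∈ runEvents I C H := by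
  intro C H
  induction H generalizing C with
  | nil => rintro - - ⟨s, hs, -⟩; simp at hs
  | cons e H ih =>
    rintro happ hst ⟨s, hs, hsp⟩
    rw [runEvents, List.mem_append]
    by_cases hep : e.1 = p
    · left
      have : stepEvent I C e = some (Event.inv o) := by
        rw [stepEvent_eq, hep, hst]
        exact hinv e.2
      simp [this]
    · right
      refine ih (applyStep I C e) happ.2 ?_ ?_
      · rw [applyStep_states_ne I C e (fun h => hep h.symm)]
        exact hst
      · rcases List.mem_cons.1 hs with h | h
        · exact absurd (h ▸ hsp) hep
        · exact ⟨s, h, hsp⟩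

include halg in
lemma test_invoked_iff {H : List (Step n I.Msg)} (hH : H ∈ Histories I) :
    Event.inv ToSOp.test ∈ events I H ↔ ∃ s ∈ H, s.1 = p0 := by
  constructor
  · intro h
    obtain ⟨s, hs, hps⟩ := event_proc halg h
    exact ⟨s, hs, by rw [hps]; exact halg.proc_test⟩
  · intro h
    exact first_step_invokes halg.invokes_test (initConfig I) H hH rfl h

include halg in
lemma set_invoked_iff {H : List (Step n I.Msg)} (hH : H ∈ Histories I) :
    Event.inv ToSOp.set ∈ events I H ↔ ∃ s ∈ H, s.1 = p1 := by
  constructor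
  · intro h
    obtain ⟨s, hs, hps⟩ := event_proc halg h
    exact ⟨s, hs, by rw [hps]; exact halg.proc_set⟩
  · intro h
    exact first_step_invokes halg.invokes_set (initConfig I) H hH rfl h

/-- Appending a single always-applicable step. -/
lemma hist_snoc_none {H : List (Step n I.Msg)} (hH : H ∈ Histories I) (p : Fin n) :
    (H ++ [(p, none)]) ∈ Histories I :=
  (hist_append I).2 ⟨hH, trivial, trivial⟩

lemma hist_snoc {H : List (Step n I.Msg)} (hH : H ∈ Histories I) {e : Step n I.Msg}
    (he : Applicable I (applyHist I (initConfig I) H) e) : (H ++ [e]) ∈ Histories I :=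
  (hist_append I).2 ⟨hH, he, trivial⟩

include halg in
lemma events_first_p0 {H : List (Step n I.Msg)} (hH : H ∈ Histories I)
    (hfree : ∀ s ∈ H, s.1 ≠ p0) :
    runEvents I (applyHist I (initConfig I) H) [((p0 : Fin n), (none : Option I.Msg))] =
      [Event.inv ToSOp.test] := by
  have hst : (applyHist I (initConfig I) H).states p0 = I.init p0 :=
    applyHist_states_ne I _ H hfree
  have : stepEvent I (applyHist I (initConfig I) H) ((p0 : Fin n), (none : Option I.Msg)) =
      some (Event.inv ToSOp.test) := by
    rw [stepEvent_eq]
    simp only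
    rw [hst]
    exact halg.invokes_test none
  simp [runEvents, this]

include halg in
lemma events_first_p1 {H : List (Step n I.Msg)} (hH : H ∈ Histories I)
    (hfree : ∀ s ∈ H, s.1 ≠ p1) :
    runEvents I (applyHist I (initConfig I) H) [((p1 : Fin n), (none : Option I.Msg))] =
      [Event.inv ToSOp.set] := by
  have hst : (applyHist I (initConfig I) H).states p1 = I.init p1 :=
    applyHist_states_ne I _ H hfree
  have : stepEvent I (applyHist I (initConfig I) H) ((p1 : Fin n), (none : Option I.Msg)) =
      some (Event.inv ToSOp.set) := by
    rw [stepEvent_eq]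
    simp only
    rw [hst]
    exact halg.invokes_set none
  simp [runEvents, this]

variable (hLF : OneResilientLockFree I)

include halg hLF in
/-- From any history with TEST pending, a finite extension avoiding process `c`
completes TEST. -/
lemma compTest {c : Fin n} (hc : c ≠ p0) {H : List (Step n I.Msg)} (hH : H ∈ Histories I)
    (hpend : Pending ToSOp.test (events I H)) :
    ∃ τ, (∀ s ∈ τ, s.1 ≠ c) ∧ (H ++ τ) ∈ Histories I ∧
      ∃ v, Event.res ToSOp.test v ∈ events I (H ++ τ) := by
  have hADV : ∀ (G : List (Step n I.Msg)) (e : Step n I.Msg), G ∈ Histories I → True →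
      (e.1 ≠ c) → Applicable I (applyHist I (initConfig I) G) e →
      ∃ σ, (G ++ (σ ++ [e])) ∈ Histories I ∧ True ∧ ∀ s ∈ σ, s.1 ≠ c :=
    fun G e h1 _ _ h4 => ⟨[], by simpa using hist_snoc h1 h4, trivial, by simp⟩
  -- first round
  obtain ⟨S, hInf, hCrash, hCor, hFair, hHist, hLive, -⟩ :=
    exists_fair_schedule (fun p => p ≠ c) p0 hc.symm
      (fun p q hp hq => by
        simp only [not_not] at hp hq
        rw [hp, hq])
      (fun _ => True) hADV H hH trivial
  obtain ⟨k, o', hco, hnco⟩ := hLF H hH p0 ToSOp.test halg.proc_test hpend S hInf hCrash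
    (hCor p0 hc.symm) hFair
  have hτ1free : ∀ s ∈ prefixSteps S k, s.1 ≠ c := by
    intro s hs
    simp only [prefixSteps, List.mem_map, List.mem_range] at hs
    obtain ⟨j, -, rfl⟩ := hs
    exact hLive j
  by_cases hres : ∃ v, Event.res ToSOp.test v ∈ events I (H ++ prefixSteps S k)
  · exact ⟨prefixSteps S k, hτ1free, hHist k, hres⟩
  push_neg at hres
  -- the completed operation must be SET; TEST is still pending
  have hset : Completed ToSOp.set (events I (H ++ prefixSteps S k)) := by
    cases o' with
    | test =>
      obtain ⟨v, hv⟩ := hco.2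
      exact absurd hv (hres v)
    | set => exact hco
  have hpend2 : Pending ToSOp.test (events I (H ++ prefixSteps S k)) := by
    refine ⟨?_, hres⟩
    rw [events_append, List.mem_append]
    exact Or.inl hpend.1
  -- second round
  obtain ⟨S₂, hInf₂, hCrash₂, hCor₂, hFair₂, hHist₂, hLive₂, -⟩ :=
    exists_fair_schedule (fun p => p ≠ c) p0 hc.symm
      (fun p q hp hq => by
        simp only [not_not] at hp hq
        rw [hp, hq])
      (fun _ => True) hADV (H ++ prefixSteps S k) (hHist k) trivial
  obtain ⟨k₂, o₂, hco₂, hnco₂⟩ := hLF (H ++ prefixSteps S k) (hHist k) p0 ToSOp.test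
    halg.proc_test hpend2 S₂ hInf₂ hCrash₂ (hCor₂ p0 hc.symm) hFair₂
  have ho₂ : o₂ = ToSOp.test := by
    cases o₂ with
    | test => rfl
    | set => exact absurd hset hnco₂
  subst ho₂
  obtain ⟨v, hv⟩ := hco₂.2
  refine ⟨prefixSteps S k ++ prefixSteps S₂ k₂, ?_, ?_, v, ?_⟩
  · intro s hs
    rcases List.mem_append.1 hs with hs | hs
    · exact hτ1free s hs
    · simp only [prefixSteps, List.mem_map, List.mem_range] at hs
      obtain ⟨j, -, rfl⟩ := hs
      exact hLive₂ j
  · rw [← List.append_assoc]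
    exact hHist₂ k₂
  · rw [← List.append_assoc]
    exact hv

include halg hLF in
/-- From any history with SET pending and TEST unanswered, a finite extension avoiding
`p0` completes SET. -/
lemma compSet {H : List (Step n I.Msg)} (hH : H ∈ Histories I)
    (hpend : Pending ToSOp.set (events I H))
    (hnores : ∀ v, Event.res ToSOp.test v ∉ events I H) :
    ∃ τ, (∀ s ∈ τ, s.1 ≠ p0) ∧ (H ++ τ) ∈ Histories I ∧
      Completed ToSOp.set (events I (H ++ τ)) := by
  have hADV : ∀ (G : List (Step n I.Msg)) (e : Step n I.Msg), G ∈ Histories I → True →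
      (e.1 ≠ p0) → Applicable I (applyHist I (initConfig I) G) e →
      ∃ σ, (G ++ (σ ++ [e])) ∈ Histories I ∧ True ∧ ∀ s ∈ σ, s.1 ≠ p0 :=
    fun G e h1 _ _ h4 => ⟨[], by simpa using hist_snoc h1 h4, trivial, by simp⟩
  obtain ⟨S, hInf, hCrash, hCor, hFair, hHist, hLive, -⟩ :=
    exists_fair_schedule (fun p => p ≠ p0) p1 halg.distinct.symm
      (fun p q hp hq => by
        simp only [not_not] at hp hq
        rw [hp, hq])
      (fun _ => True) hADV H hH trivial
  obtain ⟨k, o', hco, hnco⟩ := hLF H hH p1 ToSOp.set halg.proc_set hpend S hInf hCrash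
    (hCor p1 halg.distinct.symm) hFair
  have hτfree : ∀ s ∈ prefixSteps S k, s.1 ≠ p0 := by
    intro s hs
    simp only [prefixSteps, List.mem_map, List.mem_range] at hs
    obtain ⟨j, -, rfl⟩ := hs
    exact hLive j
  have ho : o' = ToSOp.set := by
    cases o' with
    | set => rfl
    | test =>
      obtain ⟨v, hv⟩ := hco.2
      rw [events_append, List.mem_append] at hv
      rcases hv with hv | hv
      · exact absurd hv (hnores v)
      · exact absurd hv (by
          have := no_res_events (o := ToSOp.test) (v := v) halg
            (C := applyHist I (initConfig I) H) (H := prefixSteps S k)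
            (by rw [halg.proc_test]; exact hτfree)
          exact this)
  subst ho
  exact ⟨prefixSteps S k, hτfree, hHist k, hco⟩

include halg hLF in
/-- Any history extends to one in which TEST has returned. -/
lemma dec {H : List (Step n I.Msg)} (hH : H ∈ Histories I) :
    ∃ H' v, (H ++ H') ∈ Histories I ∧ Event.res ToSOp.test v ∈ events I (H ++ H') := by
  by_cases hres : ∃ v, Event.res ToSOp.test v ∈ events I H
  · obtain ⟨v, hv⟩ := hres
    exact ⟨[], v, by simpa using hH, by simpa using hv⟩
  push_neg at hres
  by_cases hinv : Event.inv ToSOp.test ∈ events I H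
  · obtain ⟨τ, -, h1, v, h2⟩ := compTest halg hLF halg.distinct.symm hH ⟨hinv, hres⟩
    exact ⟨τ, v, h1, h2⟩
  · have hfree : ∀ s ∈ H, s.1 ≠ p0 := by
      intro s hs hsp
      exact hinv ((test_invoked_iff halg hH).2 ⟨s, hs, hsp⟩)
    have hH₂ : (H ++ [((p0 : Fin n), (none : Option I.Msg))]) ∈ Histories I :=
      hist_snoc_none hH p0
    have hev₂ : events I (H ++ [((p0 : Fin n), (none : Option I.Msg))]) =
        events I H ++ [Event.inv ToSOp.test] := by
      rw [events_append, events_first_p0 halg hH hfree]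
    have hpend₂ : Pending ToSOp.test
        (events I (H ++ [((p0 : Fin n), (none : Option I.Msg))])) := by
      rw [hev₂]
      constructor
      · simp
      · intro v hv
        rcases List.mem_append.1 hv with hv | hv
        · exact hres v hv
        · simp at hv
    obtain ⟨τ, -, h1, v, h2⟩ := compTest halg hLF halg.distinct.symm hH₂ hpend₂
    rw [List.append_assoc] at h1 h2
    exact ⟨[((p0 : Fin n), (none : Option I.Msg))] ++ τ, v, h1, h2⟩

end ToSHelpers

end MP
namespace MP

open scoped Classical

section Bivalence

set_option linter.unusedSectionVars false

variable {n : ℕ} {I : Impl n ToSOp Bool} {p0 p1 : Fin n}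
  {f : List (Step n I.Msg) → List (Event ToSOp Bool)}
  (halg : ToSAlg I p0 p1) (hLF : OneResilientLockFree I)
  (hlin : IsLinearizationFn I ToSSpec f)
  (hmono : ∀ G H, G ∈ Histories I → H ∈ Histories I → G <+: H → f G <+: f H)

/-- Bivalent history: both return values of TEST remain reachable. -/
def Biv (I : Impl n ToSOp Bool) (H : List (Step n I.Msg)) : Prop :=
  H ∈ Histories I ∧ ¬ Forced I H true ∧ ¬ Forced I H false

lemma not_forced_iff {H : List (Step n I.Msg)} (v : Bool) :
    ¬ Forced I H v ↔ ∃ H', (H ++ H') ∈ Histories I ∧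
      Event.res ToSOp.test (!v) ∈ events I (H ++ H') := by
  constructor
  · intro h
    rw [Forced] at h
    push_neg at h
    obtain ⟨H', h1, w, h2, h3⟩ := h
    have : w = !v := by cases v <;> cases w <;> simp_all
    exact ⟨H', h1, this ▸ h2⟩
  · rintro ⟨H', h1, h2⟩ hf
    have := hf H' h1 (!v) h2
    cases v <;> simp_all

include halg hLF in
lemma forced_unique {H : List (Step n I.Msg)} (hH : H ∈ Histories I) {v w : Bool}
    (hv : Forced I H v) (hw : Forced I H w) : v = w := by
  obtain ⟨H', u, h1, h2⟩ := dec halg hLF hH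
  rw [← hv H' h1 u h2, ← hw H' h1 u h2]

include halg hLF in
lemma not_biv_forced {H : List (Step n I.Msg)} (hH : H ∈ Histories I) (h : ¬ Biv I H) :
    ∃ v, Forced I H v := by
  rw [Biv] at h
  by_contra hc
  push_neg at hc
  exact h ⟨hH, hc true, hc false⟩

include halg hLF hlin hmono in
/-- The empty history is bivalent. -/
lemma biv_nil : Biv I ([] : List (Step n I.Msg)) := by
  have hnil : ([] : List (Step n I.Msg)) ∈ Histories I := trivial
  refine ⟨hnil, ?_, ?_⟩
  · -- reach a FALSE return by crashing p1 from the start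
    have hH₁ : ([((p0 : Fin n), (none : Option I.Msg))]) ∈ Histories I := by
      simpa using hist_snoc_none hnil p0
    have hev₁ : events I [((p0 : Fin n), (none : Option I.Msg))] = [Event.inv ToSOp.test] := by
      have := events_first_p0 halg hnil (by simp)
      simpa [events, applyHist] using this
    have hpend : Pending ToSOp.test (events I [((p0 : Fin n), (none : Option I.Msg))]) := by
      rw [hev₁]
      exact ⟨by simp, by simp⟩
    obtain ⟨τ, hτfree, hHτ, v, hres⟩ := compTest halg hLF halg.distinct.symm hH₁ hpend
    have hnoset : Event.inv ToSOp.set ∉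
        events I ([((p0 : Fin n), (none : Option I.Msg))] ++ τ) := by
      have : ∀ s ∈ ([((p0 : Fin n), (none : Option I.Msg))] ++ τ), s.1 ≠ I.procOf ToSOp.set := by
        intro s hs
        rw [halg.proc_set]
        rcases List.mem_append.1 hs with hs | hs
        · simp only [List.mem_singleton] at hs
          rw [hs]
          exact halg.distinct
        · exact hτfree s hs
      exact no_inv_events halg this
    have hvf : v = false := res_false_of_no_set halg hlin hHτ hres hnoset
    rw [not_forced_iff]
    exact ⟨[((p0 : Fin n), (none : Option I.Msg))] ++ τ, by simpa using hHτ,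
      by simp only [Bool.not_true]; simpa [hvf] using hres⟩
  · -- reach a TRUE return by first completing SET without p0
    have hA₀ : ([((p1 : Fin n), (none : Option I.Msg))]) ∈ Histories I := by
      simpa using hist_snoc_none hnil p1
    have hevA : events I [((p1 : Fin n), (none : Option I.Msg))] = [Event.inv ToSOp.set] := by
      have := events_first_p1 halg hnil (by simp)
      simpa [events, applyHist] using this
    have hpendA : Pending ToSOp.set (events I [((p1 : Fin n), (none : Option I.Msg))]) := by
      rw [hevA]
      exact ⟨by simp, by simp⟩
    obtain ⟨τ₁, hτ₁free, hHK, hcompset⟩ := compSet halg hLF hA₀ hpendA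
      (by rw [hevA]; simp)
    set HK := [((p1 : Fin n), (none : Option I.Msg))] ++ τ₁ with hHKdef
    have hKfree : ∀ s ∈ HK, s.1 ≠ p0 := by
      intro s hs
      rcases List.mem_append.1 hs with hs | hs
      · simp only [List.mem_singleton] at hs
        rw [hs]
        exact halg.distinct.symm
      · exact hτ₁free s hs
    have hnotest : Event.inv ToSOp.test ∉ events I HK :=
      no_inv_events halg (by rw [halg.proc_test]; exact hKfree)
    obtain ⟨hsetf, hnoresf⟩ := committed_after_set halg hlin hHK hcompset hnotest
    have hforcedK : Forced I HK true := forced_true_of_f halg hlin hmono hHK hsetf hnoresf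
    -- now let p0 run: TEST returns, necessarily true
    have hH₂ : (HK ++ [((p0 : Fin n), (none : Option I.Msg))]) ∈ Histories I :=
      hist_snoc_none hHK p0
    have hev₂ : events I (HK ++ [((p0 : Fin n), (none : Option I.Msg))]) =
        events I HK ++ [Event.inv ToSOp.test] := by
      rw [events_append, events_first_p0 halg hHK hKfree]
    have hnoresK : ∀ v, Event.res ToSOp.test v ∉ events I HK := fun v h =>
      no_res_events halg (o := ToSOp.test) (v := v)
        (by rw [halg.proc_test]; exact hKfree) h
    have hpend₂ : Pending ToSOp.test
        (events I (HK ++ [((p0 : Fin n), (none : Option I.Msg))])) := by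
      rw [hev₂]
      refine ⟨by simp, fun v hv => ?_⟩
      rcases List.mem_append.1 hv with hv | hv
      · exact hnoresK v hv
      · simp at hv
    obtain ⟨τ₂, -, hHfin, v, hres⟩ := compTest halg hLF halg.distinct.symm hH₂ hpend₂
    have hvt : v = true := by
      have h1 : (HK ++ ([((p0 : Fin n), (none : Option I.Msg))] ++ τ₂)) ∈ Histories I := by
        rwa [← List.append_assoc]
      have h2 : Event.res ToSOp.test v ∈
          events I (HK ++ ([((p0 : Fin n), (none : Option I.Msg))] ++ τ₂)) := by
        rwa [← List.append_assoc]
      exact hforcedK _ h1 v h2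
    rw [not_forced_iff]
    refine ⟨HK ++ [((p0 : Fin n), (none : Option I.Msg))] ++ τ₂, by simpa using hHfin, ?_⟩
    simp only [Bool.not_false]
    have : ([] : List (Step n I.Msg)) ++ (HK ++ [((p0 : Fin n), (none : Option I.Msg))] ++ τ₂) =
        HK ++ [((p0 : Fin n), (none : Option I.Msg))] ++ τ₂ := by simp
    rw [this]
    exact hvt ▸ hres

end Bivalence

end MP
namespace MP

open scoped Classical

section Critical

set_option linter.unusedSectionVars false

variable {n : ℕ} {Op Val : Type} (I : Impl n Op Val)

lemma conf_snoc (C : Config I) (X : List (Step n I.Msg)) (s : Step n I.Msg) :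
    applyHist I C (X ++ [s]) = applyStep I (applyHist I C X) s := by
  rw [applyHist_append]; rfl

lemma events_snoc (X : List (Step n I.Msg)) (s : Step n I.Msg) :
    events I (X ++ [s]) =
      events I X ++ (stepEvent I (applyHist I (initConfig I) X) s).toList := by
  rw [events_append]
  simp [runEvents]

lemma happ_of_hist {X Y : List (Step n I.Msg)} (h : (X ++ Y) ∈ Histories I) :
    ApplicableHist I (applyHist I (initConfig I) X) Y := ((hist_append I).1 h).2

end Critical

section Critical2

set_option linter.unusedSectionVars false

variable {n : ℕ} {I : Impl n ToSOp Bool} {p0 p1 : Fin n}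
  {f : List (Step n I.Msg) → List (Event ToSOp Bool)}
  (halg : ToSAlg I p0 p1) (hLF : OneResilientLockFree I)
  (hlin : IsLinearizationFn I ToSSpec f)
  (hmono : ∀ G H, G ∈ Histories I → H ∈ Histories I → G <+: H → f G <+: f H)

include halg hLF in
lemma forced_congr {X₁ X₂ : List (Step n I.Msg)} {v : Bool}
    (hX₁ : X₁ ∈ Histories I) (hX₂ : X₂ ∈ Histories I)
    (hconf : applyHist I (initConfig I) X₁ = applyHist I (initConfig I) X₂)
    (hev : ∀ w : Bool, Event.res ToSOp.test w ∈ events I X₁ ↔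
      Event.res ToSOp.test w ∈ events I X₂)
    (h : Forced I X₁ v) : Forced I X₂ v := by
  intro H' hh w hw
  have happ : ApplicableHist I (applyHist I (initConfig I) X₂) H' := happ_of_hist I hh
  have hh1 : (X₁ ++ H') ∈ Histories I := by
    rw [hist_append]
    exact ⟨hX₁, hconf ▸ happ⟩
  refine h H' hh1 w ?_
  rw [events_append] at hw ⊢
  rcases List.mem_append.1 hw with hw | hw
  · exact List.mem_append.2 (Or.inl ((hev w).2 hw))
  · rw [← hconf] at hw
    exact List.mem_append.2 (Or.inr hw)

include halg hLF hlin hmono in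
/-- The heart of the impossibility: no step `d` can flip the forced value of the
step `e` at a configuration. -/
lemma critical {G' : List (Step n I.Msg)} {d e : Step n I.Msg}
    (hG' : G' ∈ Histories I)
    (hHde : ((G' ++ [d]) ++ [e]) ∈ Histories I)
    (hHe : (G' ++ [e]) ∈ Histories I)
    {v : Bool}
    (hFe : Forced I (G' ++ [e]) v)
    (hFde : Forced I ((G' ++ [d]) ++ [e]) (!v)) : False := by
  set C := applyHist I (initConfig I) G' with hC
  have hGd : (G' ++ [d]) ∈ Histories I := hist_prefix I ⟨[e], by simp⟩ hHde
  have hd : Applicable I C d := (happ_of_hist I hGd).1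
  have he' : Applicable I C e := (happ_of_hist I hHe).1
  have hconfGe : applyHist I (initConfig I) (G' ++ [e]) = applyStep I C e :=
    conf_snoc I _ G' e
  have hconfGd : applyHist I (initConfig I) (G' ++ [d]) = applyStep I C d :=
    conf_snoc I _ G' d
  have heGd : Applicable I (applyStep I C d) e := by
    rw [← hconfGd]
    exact (happ_of_hist I hHde).1
  by_cases hqd : d.1 = e.1
  · -- both steps by the same process q
    set q := e.1 with hq
    -- TEST has not yet responded at G'
    have hnoresG' : ∀ w, Event.res ToSOp.test w ∉ events I G' := by
      intro w hw
      have hFG : Forced I G' w := forced_of_res halg hw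
      obtain ⟨H'', u', hh1, hres1⟩ := dec halg hLF hHe
      have hu1 : u' = v := hFe H'' hh1 u' hres1
      have hu2 : u' = w := by
        have h1 : (G' ++ ([e] ++ H'')) ∈ Histories I := by rwa [← List.append_assoc]
        have h2 : Event.res ToSOp.test u' ∈ events I (G' ++ ([e] ++ H'')) := by
          rwa [← List.append_assoc]
        exact hFG ([e] ++ H'') h1 u' h2
      obtain ⟨H₃, u₃, hh3, hres3⟩ := dec halg hLF hHde
      have hu3 : u₃ = !v := hFde H₃ hh3 u₃ hres3
      have hu4 : u₃ = w := by
        have h1 : (G' ++ ([d] ++ [e] ++ H₃)) ∈ Histories I := by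
          simpa [List.append_assoc] using hh3
        have h2 : Event.res ToSOp.test u₃ ∈ events I (G' ++ ([d] ++ [e] ++ H₃)) := by
          simpa [List.append_assoc] using hres3
        exact hFG ([d] ++ [e] ++ H₃) h1 u₃ h2
      rw [hu1] at hu2
      rw [hu3] at hu4
      rw [← hu4] at hu2
      cases v <;> simp at hu2
    -- obtain a q-free extension π of G' with a forced value
    have hmain : ∃ (π : List (Step n I.Msg)) (u : Bool), (∀ s ∈ π, s.1 ≠ q) ∧
        (G' ++ π) ∈ Histories I ∧ Forced I (G' ++ π) u := by
      by_cases hqp0 : q = p0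
      · -- q is the tester: complete SET without p0 and use the commitment lemmas
        have hπ : ∃ π : List (Step n I.Msg), (∀ s ∈ π, s.1 ≠ q) ∧
            (G' ++ π) ∈ Histories I ∧ Completed ToSOp.set (events I (G' ++ π)) := by
          by_cases hcs : Completed ToSOp.set (events I G')
          · exact ⟨[], by simp, by simpa using hG', by simpa using hcs⟩
          · by_cases hisv : Event.inv ToSOp.set ∈ events I G'
            · have hpend : Pending ToSOp.set (events I G') := by
                refine ⟨hisv, fun w hw => hcs ⟨hisv, w, hw⟩⟩
              obtain ⟨τ, hτ, h1, h2⟩ := compSet halg hLF hG' hpend hnoresG'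
              exact ⟨τ, fun s hs => by rw [hqp0]; exact hτ s hs, h1, h2⟩
            · have hfree1 : ∀ s ∈ G', s.1 ≠ p1 := by
                intro s hs hsp
                exact hisv ((set_invoked_iff halg hG').2 ⟨s, hs, hsp⟩)
              have hG'' : (G' ++ [((p1 : Fin n), (none : Option I.Msg))]) ∈ Histories I :=
                hist_snoc_none hG' p1
              have hev'' : events I (G' ++ [((p1 : Fin n), (none : Option I.Msg))]) =
                  events I G' ++ [Event.inv ToSOp.set] := by
                rw [events_append, events_first_p1 halg hG' hfree1]
              have hpend'' : Pending ToSOp.set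
                  (events I (G' ++ [((p1 : Fin n), (none : Option I.Msg))])) := by
                rw [hev'']
                refine ⟨by simp, fun w hw => ?_⟩
                rcases List.mem_append.1 hw with hw | hw
                · exact hisv ((halg.wellFormed G' hG').2.2 ToSOp.set w hw)
                · simp at hw
              have hnores'' : ∀ w, Event.res ToSOp.test w ∉
                  events I (G' ++ [((p1 : Fin n), (none : Option I.Msg))]) := by
                intro w hw
                rw [hev''] at hw
                rcases List.mem_append.1 hw with hw | hw
                · exact hnoresG' w hw
                · simp at hw
              obtain ⟨τ, hτ, h1, h2⟩ := compSet halg hLF hG'' hpend'' hnores''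
              refine ⟨[((p1 : Fin n), (none : Option I.Msg))] ++ τ, ?_, ?_, ?_⟩
              · intro s hs
                rcases List.mem_append.1 hs with hs | hs
                · simp only [List.mem_singleton] at hs
                  rw [hs, hqp0]
                  exact halg.distinct.symm
                · rw [hqp0]; exact hτ s hs
              · rwa [← List.append_assoc]
              · rwa [← List.append_assoc]
        obtain ⟨π, hπfree, hY, hYset⟩ := hπ
        by_cases hw : ∃ w, Event.res ToSOp.test w ∈ f (G' ++ π)
        · obtain ⟨w, hw⟩ := hw
          exact ⟨π, w, hπfree, hY, forced_of_f_res halg hlin hmono hY hw⟩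
        · push_neg at hw
          exact ⟨π, true, hπfree, hY,
            forced_true_of_f halg hlin hmono hY (completed_inv_f hlin hY hYset) hw⟩
      · -- q is not the tester: complete TEST without q
        by_cases hti : Event.inv ToSOp.test ∈ events I G'
        · have hpend : Pending ToSOp.test (events I G') := ⟨hti, hnoresG'⟩
          obtain ⟨τ, hτ, h1, u, h2⟩ :=
            compTest halg hLF (c := q) hqp0 hG' hpend
          exact ⟨τ, u, hτ, h1, forced_of_res halg h2⟩
        · have hfree0 : ∀ s ∈ G', s.1 ≠ p0 := by
            intro s hs hsp
            exact hti ((test_invoked_iff halg hG').2 ⟨s, hs, hsp⟩)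
          have hG'' : (G' ++ [((p0 : Fin n), (none : Option I.Msg))]) ∈ Histories I :=
            hist_snoc_none hG' p0
          have hev'' : events I (G' ++ [((p0 : Fin n), (none : Option I.Msg))]) =
              events I G' ++ [Event.inv ToSOp.test] := by
            rw [events_append, events_first_p0 halg hG' hfree0]
          have hpend'' : Pending ToSOp.test
              (events I (G' ++ [((p0 : Fin n), (none : Option I.Msg))])) := by
            rw [hev'']
            refine ⟨by simp, fun w hw => ?_⟩
            rcases List.mem_append.1 hw with hw | hw
            · exact hnoresG' w hw
            · simp at hw
          obtain ⟨τ, hτ, h1, u, h2⟩ :=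
            compTest halg hLF (c := q) hqp0 hG'' hpend''
          refine ⟨[((p0 : Fin n), (none : Option I.Msg))] ++ τ, u, ?_, ?_, ?_⟩
          · intro s hs
            rcases List.mem_append.1 hs with hs | hs
            · simp only [List.mem_singleton] at hs
              rw [hs]
              exact fun hh => hqp0 hh.symm
            · exact hτ s hs
          · rwa [← List.append_assoc]
          · refine forced_of_res halg ?_
            rwa [← List.append_assoc]
    obtain ⟨π, u, hπfree, hY, hu⟩ := hmain
    have hπ : ApplicableHist I C π := happ_of_hist I hY
    have hconfY : applyHist I (initConfig I) (G' ++ π) = applyHist I C π :=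
      applyHist_append I _ G' π
    -- first transport: compare (G' ++ π) ++ [e] with (G' ++ [e]) ++ π
    obtain ⟨a1, a2, a3, a4, a5⟩ := multi_swap I C e π hπfree he' hπ
    have hYe : ((G' ++ π) ++ [e]) ∈ Histories I :=
      hist_snoc hY (by rw [hconfY]; exact a2)
    have hX₂ : ((G' ++ [e]) ++ π) ∈ Histories I := by
      rw [hist_append]
      exact ⟨hHe, by rw [hconfGe]; exact a1⟩
    have hceq : applyHist I (initConfig I) ((G' ++ π) ++ [e]) =
        applyHist I (initConfig I) ((G' ++ [e]) ++ π) := by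
      rw [conf_snoc, hconfY, applyHist_append, hconfGe, a3]
    have hev1 : events I ((G' ++ π) ++ [e]) =
        events I G' ++ (runEvents I C π ++ (stepEvent I C e).toList) := by
      rw [events_snoc, events_append, ← a4, hconfY, List.append_assoc]
    have hev2 : events I ((G' ++ [e]) ++ π) =
        events I G' ++ ((stepEvent I C e).toList ++ runEvents I C π) := by
      rw [events_append, events_snoc, hconfGe, a5, List.append_assoc]
    have hFX₂ : Forced I ((G' ++ [e]) ++ π) u := by
      refine forced_congr halg hLF hYe hX₂ hceq (fun w => ?_) (forced_extend hu)
      rw [hev1, hev2]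
      simp only [List.mem_append]
      tauto
    have hFX₂' : Forced I ((G' ++ [e]) ++ π) v := forced_extend hFe
    have huv : u = v := forced_unique halg hLF hX₂ hFX₂ hFX₂'
    -- second transport: compare ((G' ++ π) ++ [d]) ++ [e] with ((G' ++ [d]) ++ [e]) ++ π
    obtain ⟨b1, b2, b3, b4, b5⟩ := multi_swap I C d π (fun s hs => by
      rw [hqd]; exact hπfree s hs) hd hπ
    obtain ⟨c1, c2, c3, c4, c5⟩ := multi_swap I (applyStep I C d) e π hπfree heGd b1
    have hYd : ((G' ++ π) ++ [d]) ∈ Histories I :=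
      hist_snoc hY (by rw [hconfY]; exact b2)
    have hconfYd : applyHist I (initConfig I) ((G' ++ π) ++ [d]) =
        applyHist I (applyStep I C d) π := by
      rw [conf_snoc, hconfY, b3]
    have hYde : (((G' ++ π) ++ [d]) ++ [e]) ∈ Histories I :=
      hist_snoc hYd (by rw [hconfYd]; exact c2)
    have hX₄ : (((G' ++ [d]) ++ [e]) ++ π) ∈ Histories I := by
      rw [hist_append]
      refine ⟨hHde, ?_⟩
      rw [conf_snoc, hconfGd]
      exact c1
    have hceq2 : applyHist I (initConfig I) (((G' ++ π) ++ [d]) ++ [e]) =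
        applyHist I (initConfig I) (((G' ++ [d]) ++ [e]) ++ π) := by
      rw [conf_snoc, hconfYd, applyHist_append, conf_snoc, hconfGd, c3]
    have hev3 : events I (((G' ++ π) ++ [d]) ++ [e]) =
        events I G' ++ (runEvents I C π ++ ((stepEvent I C d).toList ++
          (stepEvent I (applyStep I C d) e).toList)) := by
      rw [events_snoc, events_snoc, events_append, hconfY, b4, hconfYd, c4]
      simp [List.append_assoc, ← hC]
    have hev4 : events I (((G' ++ [d]) ++ [e]) ++ π) =
        events I G' ++ (((stepEvent I C d).toList ++
          (stepEvent I (applyStep I C d) e).toList) ++ runEvents I C π) := by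
      rw [events_append, events_snoc, events_snoc, hconfGd, conf_snoc, hconfGd, c5, b5]
      simp [List.append_assoc, ← hC]
    have hFX₄ : Forced I (((G' ++ [d]) ++ [e]) ++ π) u := by
      refine forced_congr halg hLF hYde hX₄ hceq2 (fun w => ?_)
        (forced_extend (forced_extend hu))
      rw [hev3, hev4]
      simp only [List.mem_append]
      tauto
    have hFX₄' : Forced I (((G' ++ [d]) ++ [e]) ++ π) (!v) := forced_extend hFde
    have huv2 : u = !v := forced_unique halg hLF hX₄ hFX₄ hFX₄'
    rw [huv] at huv2
    cases v <;> simp at huv2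
  · -- steps by different processes: they commute exactly
    obtain ⟨s1, s2, s3, s4, s5⟩ := swap_step I C e d (fun h => hqd h.symm) he' hd
    have hX₂ : ((G' ++ [e]) ++ [d]) ∈ Histories I :=
      hist_snoc hHe (by rw [hconfGe]; exact s1)
    have hcfeq : applyHist I (initConfig I) ((G' ++ [e]) ++ [d]) =
        applyHist I (initConfig I) ((G' ++ [d]) ++ [e]) := by
      simp only [conf_snoc]
      exact s3
    have hev1 : events I ((G' ++ [e]) ++ [d]) =
        events I G' ++ ((stepEvent I C e).toList ++ (stepEvent I C d).toList) := by
      rw [events_snoc, events_snoc, hconfGe, s5]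
      simp [List.append_assoc, ← hC]
    have hev2 : events I ((G' ++ [d]) ++ [e]) =
        events I G' ++ ((stepEvent I C d).toList ++ (stepEvent I C e).toList) := by
      rw [events_snoc, events_snoc, hconfGd, s4]
      simp [List.append_assoc, ← hC]
    have hF2 : Forced I ((G' ++ [d]) ++ [e]) v := by
      refine forced_congr halg hLF hX₂ hHde hcfeq (fun w => ?_) (forced_extend hFe)
      rw [hev1, hev2]
      simp only [List.mem_append]
      tauto
    have := forced_unique halg hLF hHde hF2 hFde
    cases v <;> simp at this

end Critical2

end MP
namespace MP

open scoped Classical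

section Maintain

set_option linter.unusedSectionVars false

lemma mem_split_first {α : Type _} {a : α} : ∀ {l : List α}, a ∈ l →
    ∃ l₁ l₂, l = l₁ ++ a :: l₂ ∧ a ∉ l₁ := by
  intro l h
  induction l with
  | nil => simp at h
  | cons x xs ih =>
    by_cases hx : a = x
    · exact ⟨[], xs, by rw [hx]; rfl, by simp⟩
    · have hmem : a ∈ xs := by
        rcases List.mem_cons.1 h with h' | h'
        · exact absurd h' hx
        · exact h'
      obtain ⟨l₁, l₂, heq, hnl⟩ := ih hmem
      exact ⟨x :: l₁, l₂, by rw [heq]; rfl, by simp [hnl, fun h' : a = x => hx h']⟩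

variable {n : ℕ} {I : Impl n ToSOp Bool} {p0 p1 : Fin n}
  {f : List (Step n I.Msg) → List (Event ToSOp Bool)}
  (halg : ToSAlg I p0 p1) (hLF : OneResilientLockFree I)
  (hlin : IsLinearizationFn I ToSSpec f)
  (hmono : ∀ G H, G ∈ Histories I → H ∈ Histories I → G <+: H → f G <+: f H)

include halg hLF hlin hmono in
/-- Bivalence can be maintained while taking any applicable step. -/
lemma maintain {H : List (Step n I.Msg)} (hB : Biv I H) {e : Step n I.Msg}
    (he : Applicable I (applyHist I (initConfig I) H) e) :
    ∃ σ, (H ++ (σ ++ [e])) ∈ Histories I ∧ Biv I (H ++ (σ ++ [e])) := by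
  by_contra hcon
  push_neg at hcon
  have hH : H ∈ Histories I := hB.1
  have hval : ∀ σ, (H ++ (σ ++ [e])) ∈ Histories I →
      ∃ v, Forced I (H ++ (σ ++ [e])) v := fun σ hσ =>
    not_biv_forced halg hLF hσ (hcon σ hσ)
  -- for each reachable return value b, find an e-free σ with forced value b
  have hmk : ∀ b : Bool, (∃ ρ, (H ++ ρ) ∈ Histories I ∧
      Event.res ToSOp.test b ∈ events I (H ++ ρ)) →
      ∃ σ, (∀ s ∈ σ, s ≠ e) ∧ (H ++ (σ ++ [e])) ∈ Histories I ∧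
        Forced I (H ++ (σ ++ [e])) b := by
    rintro b ⟨ρ, hρ, hres⟩
    by_cases heρ : e ∈ ρ
    · obtain ⟨l₁, l₂, rfl, hne⟩ := mem_split_first heρ
      have heq : H ++ (l₁ ++ e :: l₂) = (H ++ (l₁ ++ [e])) ++ l₂ := by
        simp [List.append_assoc]
      have hist1 : (H ++ (l₁ ++ [e])) ∈ Histories I :=
        hist_prefix I ⟨l₂, heq.symm⟩ hρ
      obtain ⟨u, hu⟩ := hval l₁ hist1
      have hub : b = u := by
        refine hu l₂ ?_ b ?_
        · rwa [← heq]
        · rwa [← heq]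
      exact ⟨l₁, fun s hs h' => hne (h' ▸ hs), hist1, hub ▸ hu⟩
    · have hfree : ∀ s ∈ ρ, s ≠ e := fun s hs h' => heρ (h' ▸ hs)
      have happρ : ApplicableHist I (applyHist I (initConfig I) H) ρ := happ_of_hist I hρ
      have happe : Applicable I (applyHist I (initConfig I) (H ++ ρ)) e := by
        rw [applyHist_append]
        exact applicable_preserved I _ ρ e happρ hfree he
      have hist1 : (H ++ (ρ ++ [e])) ∈ Histories I := by
        rw [← List.append_assoc]
        exact hist_snoc hρ happe
      obtain ⟨u, hu⟩ := hval ρ hist1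
      have hub : b = u := by
        refine hu [] (by simpa using hist1) b ?_
        have : Event.res ToSOp.test b ∈ events I ((H ++ ρ) ++ [e]) := by
          rw [events_snoc]
          exact List.mem_append.2 (Or.inl hres)
        simpa [List.append_assoc] using this
      exact ⟨ρ, hfree, hist1, hub ▸ hu⟩
  -- the two endpoint values
  obtain ⟨ρt, hρt1, hρt2⟩ := (not_forced_iff false).1 hB.2.2
  obtain ⟨ρf, hρf1, hρf2⟩ := (not_forced_iff true).1 hB.2.1
  simp only [Bool.not_false, Bool.not_true] at hρt2 hρf2
  obtain ⟨σt, hσt1, hσt2, hσt3⟩ := hmk true ⟨ρt, hρt1, hρt2⟩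
  obtain ⟨σf, hσf1, hσf2, hσf3⟩ := hmk false ⟨ρf, hρf1, hρf2⟩
  -- the value at σ = []
  have hnil : (H ++ ([] ++ [e])) ∈ Histories I := by simpa using hist_snoc hH he
  obtain ⟨v₀, hv₀⟩ := hval [] hnil
  -- choose the opposite endpoint
  obtain ⟨σs, hσ1, hσ2, hσ3⟩ : ∃ σ, (∀ s ∈ σ, s ≠ e) ∧
      (H ++ (σ ++ [e])) ∈ Histories I ∧ Forced I (H ++ (σ ++ [e])) (!v₀) := by
    cases v₀
    · exact ⟨σt, hσt1, hσt2, by simpa using hσt3⟩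
    · exact ⟨σf, hσf1, hσf2, by simpa using hσf3⟩
  -- forced values along prefixes of σs
  have happσ : ApplicableHist I (applyHist I (initConfig I) H) σs := by
    have := happ_of_hist I hσ2
    rw [applicableHist_append] at this
    exact this.1
  have hpref : ∀ i, i ≤ σs.length →
      (H ++ (σs.take i ++ [e])) ∈ Histories I := by
    intro i hi
    have htake : ApplicableHist I (applyHist I (initConfig I) H) (σs.take i) := by
      have h2 := happσ
      rw [← List.take_append_drop i σs, applicableHist_append] at h2
      exact h2.1
    have hHt : (H ++ σs.take i) ∈ Histories I := (hist_append I).2 ⟨hH, htake⟩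
    have happe : Applicable I (applyHist I (initConfig I) (H ++ σs.take i)) e := by
      rw [applyHist_append]
      exact applicable_preserved I _ _ e htake
        (fun s hs => hσ1 s (List.take_subset i σs hs)) he
    rw [← List.append_assoc]
    exact hist_snoc hHt happe
  have hprefv : ∀ i, i ≤ σs.length →
      ∃ v, Forced I (H ++ (σs.take i ++ [e])) v := fun i hi => hval _ (hpref i hi)
  choose! val hvalp using hprefv
  have h0 : val 0 = v₀ := by
    have h1 := hvalp 0 (Nat.zero_le _)
    have h2 : σs.take 0 = [] := rfl
    rw [h2] at h1
    exact forced_unique halg hLF hnil h1 hv₀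
  have hlenv : val σs.length = !v₀ := by
    have h1 := hvalp σs.length le_rfl
    rw [List.take_length] at h1
    exact forced_unique halg hLF hσ2 h1 hσ3
  -- find the flip
  have hflip : ∃ j < σs.length, val j ≠ val (j + 1) := by
    by_contra hc
    push_neg at hc
    have hconst : ∀ i, i ≤ σs.length → val i = val 0 := by
      intro i
      induction i with
      | zero => intro _; rfl
      | succ i ih =>
        intro hi
        rw [← hc i (by omega), ih (by omega)]
    have := hconst σs.length le_rfl
    rw [h0, hlenv] at this
    cases v₀ <;> simp at this
  obtain ⟨j, hj, hne⟩ := hflip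
  set d := σs[j] with hd
  have htakes : σs.take (j + 1) = σs.take j ++ [d] := by
    rw [List.take_succ, List.getElem?_eq_getElem hj]
    rfl
  have eq1 : H ++ (σs.take j ++ [e]) = (H ++ σs.take j) ++ [e] := by
    simp [List.append_assoc]
  have eq2 : H ++ (σs.take (j + 1) ++ [e]) = ((H ++ σs.take j) ++ [d]) ++ [e] := by
    rw [htakes]
    simp [List.append_assoc]
  have hG' : (H ++ σs.take j) ∈ Histories I :=
    hist_prefix I ⟨[e], eq1.symm⟩ (hpref j (by omega))
  have hHe' : ((H ++ σs.take j) ++ [e]) ∈ Histories I := by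
    rw [← eq1]; exact hpref j (by omega)
  have hHde' : (((H ++ σs.take j) ++ [d]) ++ [e]) ∈ Histories I := by
    rw [← eq2]; exact hpref (j + 1) (by omega)
  have hFe : Forced I ((H ++ σs.take j) ++ [e]) (val j) := by
    have := hvalp j (by omega)
    rwa [eq1] at this
  have hFde : Forced I (((H ++ σs.take j) ++ [d]) ++ [e]) (val (j + 1)) := by
    have := hvalp (j + 1) (by omega)
    rwa [eq2] at this
  have hvflip : val (j + 1) = !(val j) := by
    cases h1 : val j <;> cases h2 : val (j + 1) <;> simp_all
  rw [hvflip] at hFde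
  exact critical halg hLF hlin hmono hG' hHde' hHe' hFe hFde

end Maintain

end MP
namespace MP

open scoped Classical

/-- **Theorem 1 (Test-or-Set).** For all `n ≥ 2`, there is no 1-resilient lock-free
strongly linearizable implementation of the Test-or-Set object in an asynchronous
message-passing system of `n` processes. -/
theorem no_oneResilient_lockFree_stronglyLinearizable_ToS (n : ℕ) (hn : 2 ≤ n) :
    ¬ ∃ (I : Impl n ToSOp Bool) (p0 p1 : Fin n),
        ToSAlg I p0 p1 ∧ OneResilientLockFree I ∧ StronglyLinearizable I ToSSpec := by
  rintro ⟨I, p0, p1, halg, hLF, f, hlin, hmono⟩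
  have hbiv0 : Biv I ([] : List (Step n I.Msg)) := biv_nil halg hLF hlin hmono
  -- build the infinite fair crash-free run maintaining bivalence
  have hADV : ∀ (H : List (Step n I.Msg)) (e : Step n I.Msg), H ∈ Histories I →
      Biv I H → True → Applicable I (applyHist I (initConfig I) H) e →
      ∃ σ, (H ++ (σ ++ [e])) ∈ Histories I ∧ Biv I (H ++ (σ ++ [e])) ∧
        ∀ s ∈ σ, True := by
    intro H e h1 h2 _ h4
    obtain ⟨σ, a, b⟩ := maintain halg hLF hlin hmono h2 h4
    exact ⟨σ, a, b, fun _ _ => trivial⟩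
  obtain ⟨S, hInf, hCrash, hCor, hFair, hHist, -, hCkpt⟩ :=
    exists_fair_schedule (I := I) (fun _ => True) p0 trivial
      (fun p q hp _ => absurd trivial hp) (Biv I) hADV [] trivial hbiv0
  simp only [List.nil_append] at hInf hFair hHist hCkpt
  -- no prefix of the run ever contains a TEST response
  have hnores : ∀ (k : ℕ) (v : Bool), Event.res ToSOp.test v ∉ events I (prefixSteps S k) := by
    intro k v hv
    obtain ⟨k', hk', hBiv⟩ := hCkpt k
    have hmem : Event.res ToSOp.test v ∈ events I (prefixSteps S k') := by
      have hsplit : prefixSteps S k' = prefixSteps S k ++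
          prefixSteps (fun i => S (k + i)) (k' - k) := by
        rw [← prefixSteps_add]
        congr 1
        omega
      rw [hsplit, events_append]
      exact List.mem_append.2 (Or.inl hv)
    have hforced : Forced I (prefixSteps S k') v := forced_of_res halg hmem
    cases v
    · exact hBiv.2.2 hforced
    · exact hBiv.2.1 hforced
  -- TEST is invoked once p0 takes its first step
  obtain ⟨k₀, -, hp0step⟩ := hCor p0 trivial 0
  set X₀ := prefixSteps S (k₀ + 1) with hX₀def
  have hX₀ : X₀ ∈ Histories I := hHist (k₀ + 1)
  have hinv : Event.inv ToSOp.test ∈ events I X₀ := by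
    refine (test_invoked_iff halg hX₀).2 ⟨S k₀, ?_, hp0step⟩
    simp only [hX₀def, prefixSteps, List.mem_map, List.mem_range]
    exact ⟨k₀, by omega, rfl⟩
  have hpend : Pending ToSOp.test (events I X₀) := ⟨hinv, fun v => hnores (k₀ + 1) v⟩
  -- first lock-freedom application
  have hInf' : InfApplicable I (applyHist I (initConfig I) X₀) (fun i => S (k₀ + 1 + i)) :=
    infApplicable_shift (k₀ + 1) hInf
  obtain ⟨k₁, o₁, hco₁, hnco₁⟩ := hLF X₀ hX₀ p0 ToSOp.test halg.proc_test hpend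
    (fun i => S (k₀ + 1 + i)) hInf' (atMostOneCrash_shift (k₀ + 1) hCrash)
    (correct_shift (k₀ + 1) (hCor p0 trivial)) (fairDelivery_shift (k₀ + 1) hFair)
  have hX₁eq : X₀ ++ prefixSteps (fun i => S (k₀ + 1 + i)) k₁ =
      prefixSteps S (k₀ + 1 + k₁) := (prefixSteps_add S (k₀ + 1) k₁).symm
  have hset : Completed ToSOp.set (events I (prefixSteps S (k₀ + 1 + k₁))) := by
    cases o₁ with
    | test =>
      obtain ⟨v, hv⟩ := hco₁.2
      rw [hX₁eq] at hv
      exact absurd hv (hnores _ v)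
    | set => rwa [hX₁eq] at hco₁
  set X₁ := prefixSteps S (k₀ + 1 + k₁) with hX₁def
  have hX₁ : X₁ ∈ Histories I := hHist _
  have hpend₁ : Pending ToSOp.test (events I X₁) := by
    refine ⟨?_, fun v => hnores _ v⟩
    have hsplit : X₁ = X₀ ++ prefixSteps (fun i => S (k₀ + 1 + i)) k₁ := hX₁eq.symm
    rw [hsplit, events_append]
    exact List.mem_append.2 (Or.inl hinv)
  -- second lock-freedom application
  have hInf'' : InfApplicable I (applyHist I (initConfig I) X₁) (fun i => S (k₀ + 1 + k₁ + i)) :=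
    infApplicable_shift (k₀ + 1 + k₁) hInf
  obtain ⟨k₂, o₂, hco₂, hnco₂⟩ := hLF X₁ hX₁ p0 ToSOp.test halg.proc_test hpend₁
    (fun i => S (k₀ + 1 + k₁ + i)) hInf'' (atMostOneCrash_shift (k₀ + 1 + k₁) hCrash)
    (correct_shift (k₀ + 1 + k₁) (hCor p0 trivial)) (fairDelivery_shift (k₀ + 1 + k₁) hFair)
  have hX₂eq : X₁ ++ prefixSteps (fun i => S (k₀ + 1 + k₁ + i)) k₂ =
      prefixSteps S (k₀ + 1 + k₁ + k₂) := (prefixSteps_add S (k₀ + 1 + k₁) k₂).symm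
  cases o₂ with
  | set => exact hnco₂ hset
  | test =>
    obtain ⟨v, hv⟩ := hco₂.2
    rw [hX₂eq] at hv
    exact absurd hv (hnores _ v)

end MP
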